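/- arXiv:math-ph/9910026 — 9 statements merged into one kernel-verified Lean document; each statement's English description precedes it below -/
import Mathlib

section
/- Let h be a nonconstant C² solution of h''(x) − coth(x) h'(x) + sin(2 h(x)) = 0 on (0,∞) and suppose W(x₀) ≥ 1 for some x₀ > 0, where W(x) = (1/2) h'(x)² + sin²(h(x)). Then there exists ε > 0 such that |h'(x)| > ε for all x > x₀; consequently h' has a fixed sign on (x₀,∞), W(x) → ∞ as x → ∞, and h(x) tends monotonically to +∞ or to −∞. -/
/-!
Along solutions `W' = coth x · h'² ≥ 0`, so `W` is nondecreasing. If `h'` vanished at some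
`x ≥ x₀`, then `1 ≤ W x = sin² (h x) ≤ 1` would force `cos (h x) = 0`; thus `(h x, 0)` is an
equilibrium of the first-order system, and uniqueness for its (locally Lipschitz) initial value
problem makes `h` constant. Hence `h'` has a fixed sign on `[x₀, ∞)` and `W` is strictly increasing
there, so `h'² / 2 ≥ W (x₀ + 1) - 1 > 0` beyond `x₀ + 1`, while compactness bounds `|h'|` below on
`[x₀, x₀ + 1]`. Finally `W' ≥ ε²` and `±h' ≥ ε` force linear growth.
-/

open Real Set Filter Topology

theorem IsPreconnected.forall_pos_or_forall_neg {g : ℝ → ℝ} {s : Set ℝ} (hs : IsPreconnected s)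
    (hg : ContinuousOn g s) (hne : ∀ x ∈ s, g x ≠ 0) :
    (∀ x ∈ s, 0 < g x) ∨ (∀ x ∈ s, g x < 0) := by
  by_contra! ⟨⟨x, hx, hgx⟩, ⟨y, hy, hgy⟩⟩
  obtain ⟨z, hz, hgz⟩ := hs.intermediate_value hx hy hg ⟨hgx, hgy⟩
  exact hne z hz hgz

theorem exists_pos_lt_abs_of_continuousOn_Icc {g : ℝ → ℝ} {a b c : ℝ} (hab : a ≤ b)
    (hg : ContinuousOn g (Icc a b)) (hne : ∀ x ∈ Icc a b, g x ≠ 0) (hc : 0 < c)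
    (hlarge : ∀ x, b ≤ x → c ≤ |g x|) : ∃ ε > 0, ∀ x, a ≤ x → ε < |g x| := by
  obtain ⟨z, hz, hmin⟩ := isCompact_Icc.exists_isMinOn (nonempty_Icc.2 hab) hg.abs
  have hgz : 0 < |g z| := abs_pos.2 (hne z hz)
  refine ⟨min |g z| c / 2, by positivity, fun x hax => ?_⟩
  have hle : min |g z| c ≤ |g x| := by
    rcases le_total x b with hxb | hbx
    · exact (min_le_left _ _).trans (hmin ⟨hax, hxb⟩)
    · exact (min_le_right _ _).trans (hlarge x hbx)
  linarith [lt_min hgz hc]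

theorem strictMonoOn_Ioi_and_tendsto_atTop_of_le_deriv {f f' : ℝ → ℝ} {a ε : ℝ} (hε : 0 < ε)
    (hf : ∀ x ∈ Ioi a, HasDerivAt f (f' x) x) (hf' : ∀ x ∈ Ioi a, ε ≤ f' x) :
    StrictMonoOn f (Ioi a) ∧ Tendsto f atTop atTop := by
  have hcont : ContinuousOn f (Ioi a) := HasDerivAt.continuousOn hf
  refine ⟨strictMonoOn_of_hasDerivWithinAt_pos (convex_Ioi a) hcont
    (fun x hx => (hf x (interior_subset hx)).hasDerivWithinAt)
    (fun x hx => hε.trans_le (hf' x (interior_subset hx))), ?_⟩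
  have hgrowth : ∀ x, a + 1 ≤ x → f (a + 1) + ε * (x - (a + 1)) ≤ f x := by
    intro x hx
    have := (convex_Ioi a).mul_sub_le_image_sub_of_le_deriv hcont
      (fun y hy => (hf y (interior_subset hy)).differentiableAt.differentiableWithinAt)
      (fun y hy => (hf y (interior_subset hy)).deriv ▸ hf' y (interior_subset hy))
      (a + 1) (lt_add_one a) x (show a < x by linarith) hx
    linarith
  refine tendsto_atTop_mono' atTop (eventually_atTop.2 ⟨a + 1, hgrowth⟩) ?_
  exact tendsto_atTop_add_const_left _ _
    ((tendsto_id.atTop_add tendsto_const_nhds).const_mul_atTop hε)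

theorem one_lt_cosh_div_sinh {x : ℝ} (hx : 0 < x) : 1 < cosh x / sinh x := by
  rw [one_lt_div (sinh_pos_iff.2 hx)]
  exact sinh_lt_cosh x

theorem cosh_div_sinh_le_of_le {a t : ℝ} (ha : 0 < a) (hat : a ≤ t) :
    cosh t / sinh t ≤ cosh a / sinh a := by
  rw [div_le_div_iff₀ (sinh_pos_iff.2 (ha.trans_le hat)) (sinh_pos_iff.2 ha)]
  have : 0 ≤ sinh (t - a) := sinh_nonneg_iff.2 (sub_nonneg.2 hat)
  rw [sinh_sub] at this
  linarith

namespace CothPendulum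

noncomputable def field (t : ℝ) (p : ℝ × ℝ) : ℝ × ℝ := (p.2, cosh t / sinh t * p.2 - sin (2 * p.1))

noncomputable def energy (h h' : ℝ → ℝ) (x : ℝ) : ℝ := 1 / 2 * h' x ^ 2 + sin (h x) ^ 2

structure IsSolution (h h' h'' : ℝ → ℝ) : Prop where
  hasDerivAt : ∀ x ∈ Ioi (0 : ℝ), HasDerivAt h (h' x) x
  hasDerivAt_deriv : ∀ x ∈ Ioi (0 : ℝ), HasDerivAt h' (h'' x) x
  ode : ∀ x ∈ Ioi (0 : ℝ), h'' x - cosh x / sinh x * h' x + sin (2 * h x) = 0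

theorem lipschitzWith_field {a t : ℝ} (ha : 0 < a) (hat : a ≤ t) :
    LipschitzWith (cosh a / sinh a + 2).toNNReal (field t) := by
  have hcoth_pos : 0 < cosh t / sinh t := by linarith [one_lt_cosh_div_sinh (ha.trans_le hat)]
  have hcoth_le := cosh_div_sinh_le_of_le ha hat
  refine LipschitzWith.of_dist_le_mul fun p q => ?_
  rw [coe_toNNReal _ (by linarith), Prod.dist_eq, Prod.dist_eq]
  simp only [field, Real.dist_eq]
  set d := max |p.1 - q.1| |p.2 - q.2|
  have h₁ : |p.1 - q.1| ≤ d := le_max_left _ _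
  have h₂ : |p.2 - q.2| ≤ d := le_max_right _ _
  have hsin : |sin (2 * p.1) - sin (2 * q.1)| ≤ 2 * d := by
    calc |sin (2 * p.1) - sin (2 * q.1)| ≤ |2 * p.1 - 2 * q.1| := abs_sin_sub_sin_le _ _
      _ = 2 * |p.1 - q.1| := by rw [← mul_sub, abs_mul, abs_two]
      _ ≤ 2 * d := by linarith
  have hlin : |cosh t / sinh t * p.2 - cosh t / sinh t * q.2| ≤ cosh a / sinh a * d := by
    rw [← mul_sub, abs_mul, abs_of_pos hcoth_pos]
    exact mul_le_mul hcoth_le h₂ (abs_nonneg _) (hcoth_pos.le.trans hcoth_le)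
  have hd : 0 ≤ d := (abs_nonneg _).trans h₁
  refine max_le (h₂.trans (le_mul_of_one_le_left hd (by linarith [hcoth_pos.trans_le hcoth_le])))
    (abs_le.2 ?_)
  obtain ⟨hlin₁, hlin₂⟩ := abs_le.1 hlin
  obtain ⟨hsin₁, hsin₂⟩ := abs_le.1 hsin
  constructor <;> linarith

theorem hasDerivAt_energy {h h' h'' : ℝ → ℝ} {x : ℝ} (hh : HasDerivAt h (h' x) x)
    (hh' : HasDerivAt h' (h'' x) x) :
    HasDerivAt (energy h h') (h' x * (h'' x + sin (2 * h x))) x := by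
  refine (((hh'.pow 2).const_mul (1 / 2)).add (hh.sin.pow 2)).congr_deriv ?_
  rw [sin_two_mul]
  ring

variable {h h' h'' : ℝ → ℝ}

namespace IsSolution

theorem hasDerivAt_energy (hs : IsSolution h h' h'') {x : ℝ} (hx : 0 < x) :
    HasDerivAt (energy h h') (cosh x / sinh x * h' x ^ 2) x := by
  convert CothPendulum.hasDerivAt_energy (hs.hasDerivAt x hx) (hs.hasDerivAt_deriv x hx) using 1
  rw [show h'' x + sin (2 * h x) = cosh x / sinh x * h' x by linarith [hs.ode x hx]]
  ring

theorem hasDerivAt_field (hs : IsSolution h h' h'') {t : ℝ} (ht : 0 < t) :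
    HasDerivAt (fun t => (h t, h' t)) (field t (h t, h' t)) t := by
  convert (hs.hasDerivAt t ht).prodMk (hs.hasDerivAt_deriv t ht) using 1
  simp only [field, Prod.mk.injEq, true_and]
  linarith [hs.ode t ht]

theorem monotoneOn_energy (hs : IsSolution h h' h'') : MonotoneOn (energy h h') (Ioi 0) := by
  refine monotoneOn_of_hasDerivWithinAt_nonneg (convex_Ioi 0)
    (HasDerivAt.continuousOn fun x hx => hs.hasDerivAt_energy hx)
    (fun x hx => (hs.hasDerivAt_energy (interior_subset hx : 0 < x)).hasDerivWithinAt)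
    fun x hx => ?_
  have := one_lt_cosh_div_sinh (interior_subset hx : 0 < x)
  positivity

theorem strictMonoOn_energy (hs : IsSolution h h' h'') {x₀ : ℝ} (hx₀ : 0 < x₀)
    (hne : ∀ x, x₀ ≤ x → h' x ≠ 0) : StrictMonoOn (energy h h') (Ici x₀) := by
  refine strictMonoOn_of_hasDerivWithinAt_pos (convex_Ici x₀)
    (HasDerivAt.continuousOn fun x hx => hs.hasDerivAt_energy (hx₀.trans_le hx))
    (fun x hx => (hs.hasDerivAt_energy (hx₀.trans_le (interior_subset hx))).hasDerivWithinAt)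
    fun x hx => ?_
  have hx' : x₀ ≤ x := interior_subset hx
  have := one_lt_cosh_div_sinh (hx₀.trans_le hx')
  have := hne x hx'
  positivity

/-- Uniqueness for the initial value problem, against the constant solution `(h x₁, 0)`. -/
theorem eqOn_const (hs : IsSolution h h' h'') {x₁ : ℝ} (hx₁ : 0 < x₁) (hh' : h' x₁ = 0)
    (hsin : sin (2 * h x₁) = 0) : EqOn h (fun _ => h x₁) (Ioi 0) := by
  intro x hx
  have ha : 0 < min x x₁ / 2 := by have : 0 < min x x₁ := lt_min hx hx₁; positivity
  have hmem : ∀ y, y = x ∨ y = x₁ → y ∈ Ioo (min x x₁ / 2) (max x x₁ + 1) := by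
    rintro y hy
    have hmin : min x x₁ ≤ y := by rcases hy with rfl | rfl <;> simp
    have hmax : y ≤ max x x₁ := by rcases hy with rfl | rfl <;> simp
    constructor <;> linarith
  have hconst : ∀ t, HasDerivAt (fun _ => (h x₁, (0 : ℝ))) (field t (h x₁, 0)) t := fun t =>
    (hasDerivAt_const t (h x₁, (0 : ℝ))).congr_deriv (by ext <;> simp [field, hsin])
  have := ODE_solution_unique_of_mem_Ioo (s := fun _ => univ)
    (fun t ht => (lipschitzWith_field ha ht.1.le).lipschitzOnWith) (hmem x₁ (Or.inr rfl))
    (fun t ht => ⟨hs.hasDerivAt_field (ha.trans ht.1), mem_univ _⟩)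
    (fun t _ => ⟨hconst t, mem_univ _⟩) (by simp [hh']) (hmem x (Or.inl rfl))
  exact congrArg Prod.fst this

theorem deriv_ne_zero (hs : IsSolution h h' h'') (hnonconst : ¬ ∃ c : ℝ, ∀ x ∈ Ioi 0, h x = c)
    {x₀ : ℝ} (hx₀ : 0 < x₀) (hW : 1 ≤ energy h h' x₀) {x : ℝ} (hx : x₀ ≤ x) : h' x ≠ 0 := by
  intro hh'
  have hWx : 1 ≤ energy h h' x := hW.trans (hs.monotoneOn_energy hx₀ (hx₀.trans_le hx) hx)
  have hsin_sq : sin (h x) ^ 2 = 1 := by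
    simp only [energy, hh'] at hWx
    linarith [sin_sq_le_one (h x)]
  have hcos : cos (h x) = 0 := by
    nlinarith [sin_sq_add_cos_sq (h x), sq_nonneg (cos (h x))]
  exact hnonconst ⟨h x, hs.eqOn_const (hx₀.trans_le hx) hh' (by rw [sin_two_mul, hcos, mul_zero])⟩

theorem sqrt_le_abs_deriv (hs : IsSolution h h' h'') {m x : ℝ} (hm : 0 < m) (hmx : m ≤ x) :
    √(2 * (energy h h' m - 1)) ≤ |h' x| := by
  rw [← sqrt_sq_eq_abs]
  refine sqrt_le_sqrt ?_
  have := hs.monotoneOn_energy hm (hm.trans_le hmx) hmx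
  simp only [energy] at this ⊢
  linarith [sin_sq_le_one (h x)]

end IsSolution

end CothPendulum

theorem escape_criterion_general
    (h h' h'' : ℝ → ℝ)
    (hd1 : ∀ x ∈ Ioi (0:ℝ), HasDerivAt h (h' x) x)
    (hd2 : ∀ x ∈ Ioi (0:ℝ), HasDerivAt h' (h'' x) x)
    (hode : ∀ x ∈ Ioi (0:ℝ),
      h'' x - (Real.cosh x / Real.sinh x) * h' x + Real.sin (2 * h x) = 0)
    (hnonconst : ¬ ∃ c : ℝ, ∀ x ∈ Ioi (0:ℝ), h x = c)
    (x₀ : ℝ) (hx₀ : 0 < x₀)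
    (hW : 1 ≤ (1 / 2) * h' x₀ ^ 2 + Real.sin (h x₀) ^ 2) :
    (∃ ε > 0, ∀ x > x₀, ε < |h' x|) ∧
    ((∀ x > x₀, 0 < h' x) ∨ (∀ x > x₀, h' x < 0)) ∧
    Filter.Tendsto (fun x => (1 / 2) * h' x ^ 2 + Real.sin (h x) ^ 2)
      Filter.atTop Filter.atTop ∧
    ((StrictMonoOn h (Ioi x₀) ∧ Filter.Tendsto h Filter.atTop Filter.atTop) ∨
      (StrictAntiOn h (Ioi x₀) ∧ Filter.Tendsto h Filter.atTop Filter.atBot)) := by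
  have hs : CothPendulum.IsSolution h h' h'' := ⟨hd1, hd2, hode⟩
  have hne : ∀ x, x₀ ≤ x → h' x ≠ 0 := fun x => hs.deriv_ne_zero hnonconst hx₀ hW
  have hcont : ContinuousOn h' (Ici x₀) :=
    HasDerivAt.continuousOn fun x hx => hd2 x (hx₀.trans_le hx)
  have hW₁ : 1 < CothPendulum.energy h h' (x₀ + 1) :=
    hW.trans_lt (hs.strictMonoOn_energy hx₀ hne self_mem_Ici (by simp) (lt_add_one x₀))
  obtain ⟨ε, hε, hε_lt⟩ := exists_pos_lt_abs_of_continuousOn_Icc (b := x₀ + 1) (by linarith)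
    (hcont.mono Icc_subset_Ici_self) (fun x hx => hne x hx.1) (sqrt_pos.2 (by linarith))
    (fun x hx => hs.sqrt_le_abs_deriv (by linarith) hx)
  have hsign := isPreconnected_Ioi.forall_pos_or_forall_neg (hcont.mono Ioi_subset_Ici_self)
    fun x hx => hne x (le_of_lt hx)
  refine ⟨⟨ε, hε, fun x hx => hε_lt x hx.le⟩, hsign, ?_, ?_⟩
  · refine (strictMonoOn_Ioi_and_tendsto_atTop_of_le_deriv (pow_pos hε 2)
      (fun x hx => hs.hasDerivAt_energy (hx₀.trans hx)) fun x hx => ?_).2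
    calc ε ^ 2 ≤ h' x ^ 2 := (sq_lt_sq.2 (by rw [abs_of_pos hε]; exact hε_lt x hx.le)).le
      _ ≤ cosh x / sinh x * h' x ^ 2 :=
        le_mul_of_one_le_left (sq_nonneg _) (one_lt_cosh_div_sinh (hx₀.trans hx)).le
  · rcases hsign with hpos | hneg
    · exact Or.inl (strictMonoOn_Ioi_and_tendsto_atTop_of_le_deriv hε
        (fun x hx => hd1 x (hx₀.trans hx))
        fun x hx => (abs_of_pos (hpos x hx) ▸ hε_lt x (le_of_lt hx)).le)
    · obtain ⟨hmono, htendsto⟩ := strictMonoOn_Ioi_and_tendsto_atTop_of_le_deriv hε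
        (fun x hx => (hd1 x (hx₀.trans hx)).neg)
        fun x hx => (abs_of_neg (hneg x hx) ▸ hε_lt x (le_of_lt hx)).le
      exact Or.inr ⟨by simpa using hmono.neg, tendsto_neg_atTop_iff.1 htendsto⟩

/-- The escape criterion following equation (20): if a nonconstant `C²` solution of
`h'' - coth(x) h' + sin(2h) = 0` on `(0,∞)` satisfies `W(x₀) ≥ 1` for some `x₀ > 0`,
where `W = ½ h'² + sin² h`, then `|h'| > ε > 0` beyond `x₀`, `h'` has a fixed sign on
`(x₀,∞)`, `W → ∞`, and `h` tends monotonically to `+∞` or `-∞`. -/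
theorem escape_criterion
    (h h' h'' : ℝ → ℝ)
    (hd1 : ∀ x ∈ Ioi (0:ℝ), HasDerivAt h (h' x) x)
    (hd2 : ∀ x ∈ Ioi (0:ℝ), HasDerivAt h' (h'' x) x)
    (hcont : ContinuousOn h'' (Ioi 0))
    (hode : ∀ x ∈ Ioi (0:ℝ),
      h'' x - (Real.cosh x / Real.sinh x) * h' x + Real.sin (2 * h x) = 0)
    (hnonconst : ¬ ∃ c : ℝ, ∀ x ∈ Ioi (0:ℝ), h x = c)
    (x₀ : ℝ) (hx₀ : 0 < x₀)
    (hW : 1 ≤ (1 / 2) * h' x₀ ^ 2 + Real.sin (h x₀) ^ 2) :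
    (∃ ε > 0, ∀ x > x₀, ε < |h' x|) ∧
    ((∀ x > x₀, 0 < h' x) ∨ (∀ x > x₀, h' x < 0)) ∧
    Filter.Tendsto (fun x => (1 / 2) * h' x ^ 2 + Real.sin (h x) ^ 2)
      Filter.atTop Filter.atTop ∧
    ((StrictMonoOn h (Ioi x₀) ∧ Filter.Tendsto h Filter.atTop Filter.atTop) ∨
      (StrictAntiOn h (Ioi x₀) ∧ Filter.Tendsto h Filter.atTop Filter.atBot)) :=
  escape_criterion_general h h' h'' hd1 hd2 hode hnonconst x₀ hx₀ hW
end

section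
/- Let h be a C² solution of h''(x) − coth(x) h'(x) + sin(2 h(x)) = 0 on (0,∞) that is strictly increasing on (0, x₀] with h'(x₀) = 0 and 0 < h(x₀) < π/2, and suppose x₁ > x₀ is a point with h(x₁) = 0 and 0 < h(x) < π/2 on (x₀, x₁). Then W(x₁) > (1/2) sin²(h(x₀)) + ∫₀^{h(x₀)} √(2 (sin²(h(x₀)) − sin²(s))) ds, where W(x) = (1/2) h'(x)² + sin²(h(x)). -/
open Real Set Filter Topology

/-- The key estimate (25)–(27) in the proof of Lemma 5: if a solution `h` of
`h'' - coth(x) h' + sin(2h) = 0` increases strictly on `(0, x₀]`, has a critical point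
at `x₀` with `0 < h(x₀) < π/2`, and returns to `0` at `x₁ > x₀` while staying in
`(0, π/2)` on `(x₀, x₁)`, then
`W(x₁) > ½ sin²(h(x₀)) + ∫₀^{h(x₀)} √(2(sin²(h(x₀)) - sin² s)) ds`. -/
theorem energy_gain_estimate
    (h h' h'' : ℝ → ℝ)
    (hd1 : ∀ x ∈ Ioi (0:ℝ), HasDerivAt h (h' x) x)
    (hd2 : ∀ x ∈ Ioi (0:ℝ), HasDerivAt h' (h'' x) x)
    (hcont : ContinuousOn h'' (Ioi 0))
    (hode : ∀ x ∈ Ioi (0:ℝ),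
      h'' x - (Real.cosh x / Real.sinh x) * h' x + Real.sin (2 * h x) = 0)
    (x₀ x₁ : ℝ) (hx₀ : 0 < x₀) (hx₀₁ : x₀ < x₁)
    (hmono : StrictMonoOn h (Ioc 0 x₀))
    (hcrit : h' x₀ = 0)
    (hpos : 0 < h x₀) (hlt : h x₀ < π / 2)
    (hzero : h x₁ = 0)
    (hbetween : ∀ x ∈ Ioo x₀ x₁, 0 < h x ∧ h x < π / 2) :
    (1 / 2) * Real.sin (h x₀) ^ 2 +
        ∫ s in (0:ℝ)..(h x₀), Real.sqrt (2 * (Real.sin (h x₀) ^ 2 - Real.sin s ^ 2))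
      < (1 / 2) * h' x₁ ^ 2 + Real.sin (h x₁) ^ 2 := by
  set a := h x₀ with ha
  set W : ℝ → ℝ := fun x => 1 / 2 * h' x ^ 2 + Real.sin (h x) ^ 2 with hWdef
  set W' : ℝ → ℝ := fun x => (Real.cosh x / Real.sinh x) * h' x ^ 2 with hW'def
  set g : ℝ → ℝ := fun s => Real.sqrt (2 * (Real.sin a ^ 2 - Real.sin s ^ 2)) with hgdef
  have hgc : Continuous g := by
    apply Real.continuous_sqrt.comp
    fun_prop
  -- derivative of W
  have hW : ∀ x ∈ Ioi (0:ℝ), HasDerivAt W (W' x) x := by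
    intro x hx
    have d1 := hd1 x hx
    have d2 := hd2 x hx
    have hsinh : 0 < Real.sinh x := Real.sinh_pos_iff.mpr hx
    have ho := hode x hx
    rw [Real.sin_two_mul] at ho
    have e : W' x = 1 / 2 * (2 * h' x ^ 1 * h'' x)
        + 2 * Real.sin (h x) ^ 1 * (Real.cos (h x) * h' x) := by
      simp only [hW'def, pow_one]
      linear_combination (-(h' x)) * ho
    rw [e]
    exact ((d2.pow 2).const_mul (1/2 : ℝ)).add
      (((Real.hasDerivAt_sin (h x)).comp x d1).pow 2)
  have hIcc_sub : Icc x₀ x₁ ⊆ Ioi (0:ℝ) := fun x hx => lt_of_lt_of_le hx₀ hx.1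
  -- continuity of h, h', h'' on Icc x₀ x₁
  have hch : ContinuousOn h (Icc x₀ x₁) := fun x hx =>
    ((hd1 x (hIcc_sub hx)).continuousAt).continuousWithinAt
  have hch' : ContinuousOn h' (Icc x₀ x₁) := fun x hx =>
    ((hd2 x (hIcc_sub hx)).continuousAt).continuousWithinAt
  have hcW' : ContinuousOn W' (Icc x₀ x₁) := by
    apply ContinuousOn.mul
    · apply ContinuousOn.div
      · exact Real.continuous_cosh.continuousOn
      · exact Real.continuous_sinh.continuousOn
      · intro x hx
        exact ne_of_gt (Real.sinh_pos_iff.mpr (hIcc_sub hx))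
    · exact hch'.pow 2
  have huIcc : uIcc x₀ x₁ = Icc x₀ x₁ := uIcc_of_le hx₀₁.le
  -- W is monotone on [x₀, x₁]
  have hWmono : MonotoneOn W (Icc x₀ x₁) := by
    apply monotoneOn_of_deriv_nonneg (convex_Icc _ _)
    · intro x hx
      exact (hW x (hIcc_sub hx)).continuousAt.continuousWithinAt
    · intro x hx
      rw [interior_Icc] at hx
      exact (hW x (hIcc_sub (Ioo_subset_Icc_self hx))).differentiableAt.differentiableWithinAt
    · intro x hx
      rw [interior_Icc] at hx
      rw [(hW x (hIcc_sub (Ioo_subset_Icc_self hx))).deriv]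
      have hsinh : 0 < Real.sinh x := Real.sinh_pos_iff.mpr (hIcc_sub (Ioo_subset_Icc_self hx))
      positivity
  have hWx₀ : W x₀ = Real.sin a ^ 2 := by
    simp [hWdef, hcrit, ha]
  -- pointwise estimate: W' x ≥ (-h' x) * g (h x)
  have hpt : ∀ x ∈ Icc x₀ x₁, -h' x * g (h x) ≤ W' x := by
    intro x hx
    have hWge : Real.sin a ^ 2 ≤ W x := hWx₀ ▸ hWmono (left_mem_Icc.mpr hx₀₁.le) hx hx.1
    have hsq : 2 * (Real.sin a ^ 2 - Real.sin (h x) ^ 2) ≤ h' x ^ 2 := by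
      simp only [hWdef] at hWge; nlinarith
    have hgle : g (h x) ≤ |h' x| := by
      rw [← Real.sqrt_sq_eq_abs]
      exact Real.sqrt_le_sqrt hsq
    have hg0 : 0 ≤ g (h x) := Real.sqrt_nonneg _
    have h1 : -h' x * g (h x) ≤ |h' x| * g (h x) :=
      mul_le_mul_of_nonneg_right (neg_le_abs _) hg0
    have h2 : |h' x| * g (h x) ≤ |h' x| * |h' x| :=
      mul_le_mul_of_nonneg_left hgle (abs_nonneg _)
    have hcoth : 1 ≤ Real.cosh x / Real.sinh x := by
      have hsinh : 0 < Real.sinh x := Real.sinh_pos_iff.mpr (hIcc_sub hx)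
      rw [le_div_iff₀ hsinh, one_mul]
      exact (Real.sinh_lt_cosh x).le
    have h3 : h' x ^ 2 ≤ W' x := by
      simp only [hW'def]
      nlinarith [sq_nonneg (h' x)]
    calc -h' x * g (h x) ≤ |h' x| * |h' x| := h1.trans h2
      _ = h' x ^ 2 := by rw [← abs_mul, ← sq, abs_sq]
      _ ≤ W' x := h3
  -- integrability
  have hiW' : IntervalIntegrable W' MeasureTheory.volume x₀ x₁ :=
    (hcW'.mono (by rw [huIcc])).intervalIntegrable
  have hig : IntervalIntegrable (fun x => -h' x * g (h x)) MeasureTheory.volume x₀ x₁ := by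
    apply ContinuousOn.intervalIntegrable
    rw [huIcc]
    exact (hch'.neg.mul (hgc.comp_continuousOn hch))
  -- FTC for W
  have hFTC : ∫ x in x₀..x₁, W' x = W x₁ - W x₀ := by
    apply intervalIntegral.integral_eq_sub_of_hasDerivAt
    · intro x hx
      exact hW x (hIcc_sub (huIcc ▸ hx))
    · exact hiW'
  -- substitution
  have hsub : ∫ x in x₀..x₁, h' x * g (h x) = ∫ s in a..(0:ℝ), g s := by
    have := intervalIntegral.integral_comp_smul_deriv
      (f := h) (f' := h') (g := g) (a := x₀) (b := x₁)
      (fun x hx => hd1 x (hIcc_sub (huIcc ▸ hx)))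
      (by rw [huIcc]; exact hch') hgc
    simp only [smul_eq_mul, Function.comp] at this
    rw [this, hzero, ha]
  have hneg : ∫ x in x₀..x₁, -h' x * g (h x) = ∫ s in (0:ℝ)..a, g s := by
    have : (fun x => -h' x * g (h x)) = fun x => -(h' x * g (h x)) := by
      funext x; ring
    rw [this, intervalIntegral.integral_neg, hsub, intervalIntegral.integral_symm, neg_neg]
  -- integral comparison
  have hmono' : ∫ x in x₀..x₁, -h' x * g (h x) ≤ ∫ x in x₀..x₁, W' x :=
    intervalIntegral.integral_mono_on hx₀₁.le hig hiW' hpt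
  rw [hneg, hFTC, hWx₀] at hmono'
  -- conclude
  have hsinpos : 0 < Real.sin a := by
    apply Real.sin_pos_of_pos_of_lt_pi hpos
    linarith [Real.pi_pos]
  have hsq : 0 < Real.sin a ^ 2 := by positivity
  have hEq : (1 / 2) * h' x₁ ^ 2 + Real.sin (h x₁) ^ 2 = W x₁ := by simp [hWdef]
  rw [hEq]
  show (1 / 2) * Real.sin a ^ 2 + (∫ s in (0:ℝ)..a, g s) < W x₁
  have h2 : (∫ s in (0:ℝ)..a, g s) ≤ W x₁ - Real.sin a ^ 2 := hmono'
  clear_value a W W' g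
  linarith [h2, hsq]
end

section
/- For every θ with π/3 < θ < π/2, one has (1/2) sin²(θ) + ∫₀^θ √(2 (sin²(θ) − sin²(s))) ds > 1. -/
open Real Set Filter Topology

/-- The explicit inequality from the proof of Lemma 5: for `π/3 < θ < π/2`,
`½ sin²θ + ∫₀^θ √(2 (sin²θ - sin² s)) ds > 1`. -/
theorem energy_lower_bound_exceeds_one (θ : ℝ) (h₁ : π / 3 < θ) (h₂ : θ < π / 2) :
    1 < (1 / 2) * Real.sin θ ^ 2 +
      ∫ s in (0:ℝ)..θ, Real.sqrt (2 * (Real.sin θ ^ 2 - Real.sin s ^ 2)) := by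
  have hπ := Real.pi_gt_d6
  have hπ4θ : π / 4 ≤ θ := by linarith
  have hθπ2 : θ ≤ π / 2 := le_of_lt h₂
  -- sin θ ^ 2 > 3 / 4
  have hsθ : Real.sin (π / 3) < Real.sin θ := by
    apply Real.strictMonoOn_sin ⟨by linarith, by linarith⟩ ⟨by linarith, hθπ2⟩ h₁
  rw [Real.sin_pi_div_three] at hsθ
  have h3 : (0:ℝ) ≤ 3 := by norm_num
  have hsq3 : Real.sqrt 3 ^ 2 = 3 := Real.sq_sqrt h3
  have hsq3pos : (0:ℝ) < Real.sqrt 3 := Real.sqrt_pos.mpr (by norm_num)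
  have hsin2 : 3 / 4 < Real.sin θ ^ 2 := by nlinarith
  -- continuity / integrability of the integrand
  have hcont : Continuous fun s : ℝ =>
      Real.sqrt (2 * (Real.sin θ ^ 2 - Real.sin s ^ 2)) := by
    apply Real.continuous_sqrt.comp
    continuity
  have hint : ∀ a b : ℝ, IntervalIntegrable
      (fun s : ℝ => Real.sqrt (2 * (Real.sin θ ^ 2 - Real.sin s ^ 2)))
      MeasureTheory.volume a b := fun a b => hcont.intervalIntegrable a b
  -- split the integral
  have hsplit : (∫ s in (0:ℝ)..θ, Real.sqrt (2 * (Real.sin θ ^ 2 - Real.sin s ^ 2)))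
      = (∫ s in (0:ℝ)..(π/6), Real.sqrt (2 * (Real.sin θ ^ 2 - Real.sin s ^ 2)))
      + (∫ s in (π/6:ℝ)..(π/4), Real.sqrt (2 * (Real.sin θ ^ 2 - Real.sin s ^ 2)))
      + (∫ s in (π/4:ℝ)..θ, Real.sqrt (2 * (Real.sin θ ^ 2 - Real.sin s ^ 2))) := by
    rw [intervalIntegral.integral_add_adjacent_intervals (hint _ _) (hint _ _),
      intervalIntegral.integral_add_adjacent_intervals (hint _ _) (hint _ _)]
  -- pointwise bounds
  have hb1 : ∀ s ∈ Set.Icc (0:ℝ) (π/6),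
      (1:ℝ) ≤ Real.sqrt (2 * (Real.sin θ ^ 2 - Real.sin s ^ 2)) := by
    intro s hs
    have hs1 : Real.sin s ≤ Real.sin (π/6) := by
      apply Real.sin_le_sin_of_le_of_le_pi_div_two (by linarith [hs.1]) (by linarith) hs.2
    rw [Real.sin_pi_div_six] at hs1
    have hs0 : 0 ≤ Real.sin s := Real.sin_nonneg_of_nonneg_of_le_pi hs.1 (by linarith [hs.2])
    have : (1:ℝ) ≤ 2 * (Real.sin θ ^ 2 - Real.sin s ^ 2) := by nlinarith
    calc (1:ℝ) = Real.sqrt 1 := (Real.sqrt_one).symm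
    _ ≤ _ := Real.sqrt_le_sqrt this
  have hb2 : ∀ s ∈ Set.Icc (π/6:ℝ) (π/4),
      Real.sqrt 2 / 2 ≤ Real.sqrt (2 * (Real.sin θ ^ 2 - Real.sin s ^ 2)) := by
    intro s hs
    have hs1 : Real.sin s ≤ Real.sin (π/4) := by
      apply Real.sin_le_sin_of_le_of_le_pi_div_two (by linarith [hs.1]) (by linarith) hs.2
    rw [Real.sin_pi_div_four] at hs1
    have hs0 : 0 ≤ Real.sin s :=
      Real.sin_nonneg_of_nonneg_of_le_pi (by linarith [hs.1]) (by linarith [hs.2])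
    have hsq2 : Real.sqrt 2 ^ 2 = 2 := Real.sq_sqrt (by norm_num)
    have hsq2pos : (0:ℝ) < Real.sqrt 2 := Real.sqrt_pos.mpr (by norm_num)
    have hnn : (0:ℝ) ≤ 2 * (Real.sin θ ^ 2 - Real.sin s ^ 2) := by nlinarith
    rw [Real.le_sqrt (by positivity) hnn]
    nlinarith
  -- integral lower bounds
  have hI1 : π/6 * 1 ≤ ∫ s in (0:ℝ)..(π/6),
      Real.sqrt (2 * (Real.sin θ ^ 2 - Real.sin s ^ 2)) := by
    have := intervalIntegral.integral_mono_on (a := (0:ℝ)) (b := π/6)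
      (f := fun _ => (1:ℝ)) (by positivity)
      (intervalIntegrable_const) (hint _ _) hb1
    rw [intervalIntegral.integral_const, smul_eq_mul] at this
    linarith
  have hI2 : (π/4 - π/6) * (Real.sqrt 2 / 2) ≤ ∫ s in (π/6:ℝ)..(π/4),
      Real.sqrt (2 * (Real.sin θ ^ 2 - Real.sin s ^ 2)) := by
    have := intervalIntegral.integral_mono_on (a := (π/6:ℝ)) (b := π/4)
      (f := fun _ => Real.sqrt 2 / 2) (by linarith)
      (intervalIntegrable_const) (hint _ _) hb2
    rw [intervalIntegral.integral_const, smul_eq_mul] at this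
    linarith
  have hI3 : (0:ℝ) ≤ ∫ s in (π/4:ℝ)..θ,
      Real.sqrt (2 * (Real.sin θ ^ 2 - Real.sin s ^ 2)) := by
    apply intervalIntegral.integral_nonneg hπ4θ
    intro s _; positivity
  have hsq2pos : (1.414:ℝ) < Real.sqrt 2 := by
    rw [show (1.414:ℝ) = Real.sqrt (1.414^2) by
      rw [Real.sqrt_sq]; norm_num]
    exact Real.sqrt_lt_sqrt (by positivity) (by norm_num)
  rw [hsplit]
  nlinarith [hI1, hI2, hI3, hsin2, hπ, hsq2pos]
end

section
/- Every nontrivial solution H of the linear ODE H''(x) − coth(x) H'(x) + 2 H(x) = 0 on (0,∞) with H(x)/x² → 1 as x → 0⁺ has infinitely many zeros on (0,∞). -/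
open Real Set Filter Topology

/-! In self-adjoint form the equation reads `(H' / sinh)' + (2 / sinh) H = 0`. The function
`√(sinh x) sin (x - a)` solves `(v' / sinh)' + r v = 0` with
`r = (5/4 + 3 / (4 sinh² x)) / sinh x`, and `r ≤ 2 / sinh` as soon as `sinh x ≥ 1`. By Sturm's
comparison theorem `H` therefore vanishes in every interval `[a, a + π]` with `a ≥ 1`. -/

/-- Sturm comparison: were `u > 0` on `[a, b]`, the Wronskian `u (p v') - v (p u')` would be
nondecreasing there, yet it is positive at `a` and negative at `b`. -/
theorem sturm_comparison {p q r u u' v v' : ℝ → ℝ} {a b : ℝ} (hab : a ≤ b)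
    (hu : ∀ x ∈ Icc a b, HasDerivAt u (u' x) x)
    (hpu : ∀ x ∈ Icc a b, HasDerivAt (fun y => p y * u' y) (-(q x * u x)) x)
    (hv : ∀ x ∈ Icc a b, HasDerivAt v (v' x) x)
    (hpv : ∀ x ∈ Icc a b, HasDerivAt (fun y => p y * v' y) (-(r x * v x)) x)
    (hrq : ∀ x ∈ Icc a b, r x ≤ q x) (hv_nonneg : ∀ x ∈ Icc a b, 0 ≤ v x)
    (hva : v a = 0) (hvb : v b = 0) (hpva : 0 < p a * v' a) (hpvb : p b * v' b < 0) :
    ∃ x ∈ Icc a b, u x ≤ 0 := by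
  by_contra! hu_pos
  let W : ℝ → ℝ := fun y => u y * (p y * v' y) - v y * (p y * u' y)
  have hW : ∀ x ∈ Icc a b, HasDerivAt W ((q x - r x) * u x * v x) x := fun x hx => by
    refine (((hu x hx).mul (hpv x hx)).sub ((hv x hx).mul (hpu x hx))).congr_deriv ?_
    ring
  have hW_mono : MonotoneOn W (Icc a b) := by
    refine monotoneOn_of_deriv_nonneg (convex_Icc a b)
      (fun x hx => (hW x hx).continuousAt.continuousWithinAt)
      (fun x hx => (hW x (interior_subset hx)).differentiableAt.differentiableWithinAt)
      fun x hx => ?_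
    have hx' := interior_subset hx
    rw [(hW x hx').deriv]
    exact mul_nonneg (mul_nonneg (sub_nonneg.2 (hrq x hx')) (hu_pos x hx').le) (hv_nonneg x hx')
  have hWa : 0 < W a := by
    simpa [W, hva] using mul_pos (hu_pos a (left_mem_Icc.2 hab)) hpva
  have hWb : W b < 0 := by
    simpa [W, hvb] using mul_neg_of_pos_of_neg (hu_pos b (right_mem_Icc.2 hab)) hpvb
  linarith [hW_mono (left_mem_Icc.2 hab) (right_mem_Icc.2 hab) hab]

theorem hasDerivAt_inv_sinh_mul_of_ode {H H' H'' : ℝ → ℝ} {x : ℝ} (hx : 0 < x)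
    (hH' : HasDerivAt H' (H'' x) x)
    (hode : H'' x - (cosh x / sinh x) * H' x + 2 * H x = 0) :
    HasDerivAt (fun y => (sinh y)⁻¹ * H' y) (-(2 / sinh x * H x)) x := by
  have hs : sinh x ≠ 0 := (sinh_pos_iff.2 hx).ne'
  refine (((hasDerivAt_sinh x).inv hs).mul hH').congr_deriv ?_
  simp only [Pi.inv_apply]
  field_simp at hode ⊢
  linear_combination hode

noncomputable def sturmComparison (a x : ℝ) : ℝ := √(sinh x) * sin (x - a)

noncomputable def sturmComparisonDeriv (a x : ℝ) : ℝ :=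
  cosh x / (2 * √(sinh x)) * sin (x - a) + √(sinh x) * cos (x - a)

section ComparisonFunction

variable {a x : ℝ}

theorem hasDerivAt_sqrt_sinh (hx : 0 < x) :
    HasDerivAt (fun y => √(sinh y)) (cosh x / (2 * √(sinh x))) x := by
  refine ((hasDerivAt_sqrt (sinh_pos_iff.2 hx).ne').comp x (hasDerivAt_sinh x)).congr_deriv ?_
  ring

theorem hasDerivAt_sin_sub (a x : ℝ) : HasDerivAt (fun y => sin (y - a)) (cos (x - a)) x := by
  simpa using ((hasDerivAt_id x).sub_const a).sin

theorem hasDerivAt_cos_sub (a x : ℝ) : HasDerivAt (fun y => cos (y - a)) (-sin (x - a)) x := by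
  simpa using ((hasDerivAt_id x).sub_const a).cos

theorem hasDerivAt_sturmComparison (hx : 0 < x) :
    HasDerivAt (sturmComparison a) (sturmComparisonDeriv a x) x :=
  (hasDerivAt_sqrt_sinh hx).mul (hasDerivAt_sin_sub a x)

theorem hasDerivAt_sturmComparisonDeriv (hx : 0 < x) :
    HasDerivAt (sturmComparisonDeriv a)
      ((cosh x / sinh x) * sturmComparisonDeriv a x
        - (5 / 4 + 3 / (4 * sinh x ^ 2)) * sturmComparison a x) x := by
  have hS : 0 < sinh x := sinh_pos_iff.2 hx
  set s := √(sinh x) with hs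
  have hs_pos : 0 < s := sqrt_pos.2 hS
  have hs2 : sinh x = s ^ 2 := (sq_sqrt hS.le).symm
  have hcosh : cosh x ^ 2 = s ^ 4 + 1 := by rw [cosh_sq, hs2]; ring
  have hcoef := (hasDerivAt_cosh x).div ((hasDerivAt_sqrt_sinh hx).const_mul 2)
    (by positivity : 2 * √(sinh x) ≠ 0)
  refine ((hcoef.mul (hasDerivAt_sin_sub a x)).add
    ((hasDerivAt_sqrt_sinh hx).mul (hasDerivAt_cos_sub a x))).congr_deriv ?_
  simp only [sturmComparisonDeriv, sturmComparison, Pi.div_apply, ← hs]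
  rw [hs2]
  field_simp
  linear_combination (-12 * sin (x - a)) * hcosh

theorem hasDerivAt_inv_sinh_mul_sturmComparisonDeriv (hx : 0 < x) :
    HasDerivAt (fun y => (sinh y)⁻¹ * sturmComparisonDeriv a y)
      (-((5 / 4 + 3 / (4 * sinh x ^ 2)) / sinh x * sturmComparison a x)) x := by
  have hs : sinh x ≠ 0 := (sinh_pos_iff.2 hx).ne'
  refine (((hasDerivAt_sinh x).inv hs).mul (hasDerivAt_sturmComparisonDeriv hx)).congr_deriv ?_
  simp only [Pi.inv_apply]
  field_simp
  ring

end ComparisonFunction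

theorem exists_nonpos_of_ode {H H' H'' : ℝ → ℝ}
    (hd1 : ∀ x ∈ Ioi (0:ℝ), HasDerivAt H (H' x) x)
    (hd2 : ∀ x ∈ Ioi (0:ℝ), HasDerivAt H' (H'' x) x)
    (hode : ∀ x ∈ Ioi (0:ℝ), H'' x - (cosh x / sinh x) * H' x + 2 * H x = 0)
    {a : ℝ} (ha : 1 ≤ a) : ∃ x ∈ Icc a (a + π), H x ≤ 0 := by
  have hpos : ∀ x ∈ Icc a (a + π), 0 < x := fun x hx => by linarith [hx.1]
  have hsinh_ge : ∀ x ∈ Icc a (a + π), 1 ≤ sinh x := fun x hx =>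
    (ha.trans hx.1).trans (self_le_sinh_iff.2 (hpos x hx).le)
  refine sturm_comparison (v := sturmComparison a)
    (r := fun x => (5 / 4 + 3 / (4 * sinh x ^ 2)) / sinh x)
    (by linarith [pi_pos]) (fun x hx => hd1 x (hpos x hx))
    (fun x hx =>
      hasDerivAt_inv_sinh_mul_of_ode (hpos x hx) (hd2 x (hpos x hx)) (hode x (hpos x hx)))
    (fun x hx => hasDerivAt_sturmComparison (hpos x hx))
    (fun x hx => hasDerivAt_inv_sinh_mul_sturmComparisonDeriv (hpos x hx))
    (fun x hx => ?_) (fun x hx => ?_) (by simp [sturmComparison])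
    (by simp [sturmComparison]) ?_ ?_
  · have hS := hsinh_ge x hx
    have : 3 / (4 * sinh x ^ 2) ≤ 3 / 4 :=
      div_le_div_of_nonneg_left (by norm_num) (by norm_num) (by nlinarith)
    exact div_le_div_of_nonneg_right (by linarith) (by linarith)
  · exact mul_nonneg (sqrt_nonneg _)
      (sin_nonneg_of_nonneg_of_le_pi (by linarith [hx.1]) (by linarith [hx.2]))
  · have hS := sinh_pos_iff.2 (hpos a (left_mem_Icc.2 (by linarith [pi_pos])))
    simpa [sturmComparisonDeriv] using mul_pos (inv_pos.2 hS) (sqrt_pos.2 hS)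
  · have hS := sinh_pos_iff.2 (hpos (a + π) (right_mem_Icc.2 (by linarith [pi_pos])))
    simpa [sturmComparisonDeriv] using mul_pos (inv_pos.2 hS) (sqrt_pos.2 hS)

theorem exists_zero_of_ode {H H' H'' : ℝ → ℝ}
    (hd1 : ∀ x ∈ Ioi (0:ℝ), HasDerivAt H (H' x) x)
    (hd2 : ∀ x ∈ Ioi (0:ℝ), HasDerivAt H' (H'' x) x)
    (hode : ∀ x ∈ Ioi (0:ℝ), H'' x - (cosh x / sinh x) * H' x + 2 * H x = 0)
    {a : ℝ} (ha : 1 ≤ a) : ∃ x ∈ Icc a (a + π), H x = 0 := by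
  obtain ⟨x₁, hx₁, hHx₁⟩ := exists_nonpos_of_ode hd1 hd2 hode ha
  obtain ⟨x₂, hx₂, hHx₂⟩ := exists_nonpos_of_ode (H := fun x => -H x)
    (H' := fun x => -H' x) (H'' := fun x => -H'' x)
    (fun x hx => (hd1 x hx).neg) (fun x hx => (hd2 x hx).neg)
    (fun x hx => by linear_combination -hode x hx) ha
  have hsub : uIcc x₁ x₂ ⊆ Icc a (a + π) := uIcc_subset_Icc hx₁ hx₂
  have hcont : ContinuousOn H (uIcc x₁ x₂) := fun x hx =>
    (hd1 x ((zero_lt_one.trans_le ha).trans_le (hsub hx).1)).continuousAt.continuousWithinAt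
  obtain ⟨x, hx, hHx⟩ :=
    intermediate_value_uIcc hcont (mem_uIcc.2 (Or.inl ⟨hHx₁, by linarith⟩))
  exact ⟨x, hsub hx, hHx⟩

theorem linearized_solution_oscillates_general
    (H H' H'' : ℝ → ℝ)
    (hd1 : ∀ x ∈ Ioi (0:ℝ), HasDerivAt H (H' x) x)
    (hd2 : ∀ x ∈ Ioi (0:ℝ), HasDerivAt H' (H'' x) x)
    (hode : ∀ x ∈ Ioi (0:ℝ),
      H'' x - (Real.cosh x / Real.sinh x) * H' x + 2 * H x = 0) :
    {x ∈ Ioi (0:ℝ) | H x = 0}.Infinite := by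
  refine infinite_of_not_bddAbove (not_bddAbove_iff.2 fun M => ?_)
  obtain ⟨x, hx, hHx⟩ := exists_zero_of_ode hd1 hd2 hode (le_max_left 1 (M + 1))
  have hMx : M < x := by linarith [le_max_right 1 (M + 1), hx.1]
  exact ⟨x, ⟨mem_Ioi.2 (by linarith [le_max_left 1 (M + 1), hx.1]), hHx⟩, hMx⟩

/-- The solution of the linearized equation (22), `H'' - coth(x) H' + 2H = 0`, with
`H(x) ~ x²` near `x = 0`, oscillates at infinity: it has infinitely many zeros. -/
theorem linearized_solution_oscillates
    (H H' H'' : ℝ → ℝ)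
    (hd1 : ∀ x ∈ Ioi (0:ℝ), HasDerivAt H (H' x) x)
    (hd2 : ∀ x ∈ Ioi (0:ℝ), HasDerivAt H' (H'' x) x)
    (hode : ∀ x ∈ Ioi (0:ℝ),
      H'' x - (Real.cosh x / Real.sinh x) * H' x + 2 * H x = 0)
    (hasymp : Filter.Tendsto (fun x => H x / x ^ 2) (𝓝[>] (0:ℝ)) (𝓝 1)) :
    {x ∈ Ioi (0:ℝ) | H x = 0}.Infinite :=
  linearized_solution_oscillates_general H H' H'' hd1 hd2 hode
end

section
/- The function f₀(ρ) = 2 arctan(ρ) satisfies f₀''(ρ) + (2/ρ) f₀'(ρ) − sin(2 f₀(ρ)) / (ρ² (1 − ρ²)) = 0 for all ρ ∈ (0,1), together with f₀(0) = 0 and f₀(1) = π/2. -/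
open Real Set Filter Topology

lemma deriv_two_arctan : deriv (fun r => 2 * Real.arctan r) = fun r => 2 * (1 + r ^ 2)⁻¹ := by
  funext x
  rw [deriv_const_mul _ (Real.differentiable_arctan x), Real.deriv_arctan]
  ring

lemma sin_four_arctan (x : ℝ) :
    Real.sin (2 * (2 * Real.arctan x)) = 4 * x * (1 - x ^ 2) / (1 + x ^ 2) ^ 2 := by
  have h1 : (0:ℝ) < 1 + x ^ 2 := by positivity
  have hs : Real.sin (2 * Real.arctan x) = 2 * x / (1 + x ^ 2) := by
    rw [Real.sin_two_mul, Real.sin_arctan, Real.cos_arctan]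
    have hsq := Real.mul_self_sqrt h1.le
    rw [show (2:ℝ) * (x / √(1 + x ^ 2)) * (1 / √(1 + x ^ 2)) = 2 * x / (√(1 + x ^ 2) * √(1 + x ^ 2)) by ring, hsq]
  have hc : Real.cos (2 * Real.arctan x) = (1 - x ^ 2) / (1 + x ^ 2) := by
    rw [Real.cos_two_mul, Real.cos_arctan]
    rw [div_pow, sq_sqrt h1.le, one_pow]
    field_simp
    ring
  rw [Real.sin_two_mul, hs, hc]
  field_simp
  ring

/-- The Turok–Spergel ground state (12): `f₀(ρ) = 2 arctan ρ` solves equation (9),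
`f'' + (2/ρ) f' - sin(2f)/(ρ²(1-ρ²)) = 0` on `(0,1)`, with `f₀(0) = 0`, `f₀(1) = π/2`. -/
theorem turok_spergel_solution :
    (∀ ρ ∈ Ioo (0:ℝ) 1,
      deriv (deriv (fun r => 2 * Real.arctan r)) ρ
        + 2 / ρ * deriv (fun r => 2 * Real.arctan r) ρ
        - Real.sin (2 * (2 * Real.arctan ρ)) / (ρ ^ 2 * (1 - ρ ^ 2)) = 0) ∧
    2 * Real.arctan (0:ℝ) = 0 ∧ 2 * Real.arctan (1:ℝ) = π / 2 := by
  refine ⟨?_, by simp, by rw [Real.arctan_one]; ring⟩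
  intro ρ hρ
  obtain ⟨h0, h1⟩ := hρ
  have hne : (1 + ρ ^ 2 : ℝ) ≠ 0 := by positivity
  have hd2 : deriv (deriv (fun r => 2 * Real.arctan r)) ρ
      = 2 * (-(2 * ρ) / (1 + ρ ^ 2) ^ 2) := by
    rw [deriv_two_arctan]
    have hq : HasDerivAt (fun r : ℝ => 1 + r ^ 2) (2 * ρ) ρ := by
      simpa using (hasDerivAt_pow 2 ρ).const_add 1
    have := ((hq.inv hne).const_mul (2:ℝ)).deriv
    simpa using this
  rw [hd2, deriv_two_arctan, sin_four_arctan]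
  have hρ2 : (1 - ρ ^ 2 : ℝ) ≠ 0 := by nlinarith
  field_simp
  ring
end

section
/- Let f : (0,1) → ℝ be C² and define h : (0,∞) → ℝ by h(x) = f(1/cosh(x)) − π/2. Then f satisfies f''(ρ) + (2/ρ) f'(ρ) − sin(2 f(ρ)) / (ρ² (1 − ρ²)) = 0 on (0,1) if and only if h satisfies h''(x) − coth(x) h'(x) + sin(2 h(x)) = 0 on (0,∞). -/
open Real Set Filter Topology

/-!
Along `ρ = 1 / cosh x` one has `dρ/dx = -sinh x / cosh² x`, `2 / ρ = 2 cosh x` and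
`ρ² (1 - ρ²) = sinh² x / cosh⁴ x`, while the shift by `π / 2` turns `sin (2f)` into
`-sin (2h)`. The chain rule then shows that the left side of (14) at `x` equals
`sinh² x / cosh⁴ x` times the left side of (9) at `ρ`; the factor is positive for `x > 0`,
and `x ↦ 1 / cosh x` maps `(0, ∞)` onto `(0, 1)`.
-/

noncomputable def eq9Lhs (f : ℝ → ℝ) (ρ : ℝ) : ℝ :=
  deriv (deriv f) ρ + 2 / ρ * deriv f ρ - sin (2 * f ρ) / (ρ ^ 2 * (1 - ρ ^ 2))

noncomputable def eq14Lhs (h : ℝ → ℝ) (x : ℝ) : ℝ :=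
  deriv (deriv h) x - cosh x / sinh x * deriv h x + sin (2 * h x)

theorem deriv_deriv_comp {𝕜 : Type*} [NontriviallyNormedField 𝕜] {f g : 𝕜 → 𝕜}
    {x : 𝕜}
    (hf : ∀ᶠ y in 𝓝 x, DifferentiableAt 𝕜 f (g y))
    (hg : ∀ᶠ y in 𝓝 x, DifferentiableAt 𝕜 g y)
    (hf' : DifferentiableAt 𝕜 (deriv f) (g x)) (hg' : DifferentiableAt 𝕜 (deriv g) x) :
    deriv (deriv fun y => f (g y)) x =
      deriv (deriv f) (g x) * deriv g x ^ 2 + deriv f (g x) * deriv (deriv g) x := by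
  have hfg : deriv (fun y => f (g y)) =ᶠ[𝓝 x] fun y => deriv f (g y) * deriv g y :=
    (hf.and hg).mono fun y hy => deriv_comp y hy.1 hy.2
  rw [hfg.deriv_eq]
  have hprod := (hf'.hasDerivAt.comp x hg.self_of_nhds.hasDerivAt).mul hg'.hasDerivAt
  refine hprod.deriv.trans ?_
  rw [Function.comp_apply]
  ring

theorem mapsTo_one_div_cosh : MapsTo (fun x => 1 / cosh x) (Ioi 0) (Ioo 0 1) :=
  fun x hx => ⟨by positivity, (div_lt_one (cosh_pos x)).2 (one_lt_cosh.2 (ne_of_gt hx))⟩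

theorem surjOn_one_div_cosh : SurjOn (fun x => 1 / cosh x) (Ioi 0) (Ioo 0 1) := by
  intro ρ ⟨hρ0, hρ1⟩
  have hρ : 1 < 1 / ρ := one_lt_one_div hρ0 hρ1
  refine ⟨arcosh (1 / ρ), arcosh_pos hρ, ?_⟩
  change 1 / cosh (arcosh (1 / ρ)) = ρ
  rw [cosh_arcosh hρ.le, one_div_one_div]

theorem hasDerivAt_one_div_cosh (x : ℝ) :
    HasDerivAt (fun y => 1 / cosh y) (-sinh x / cosh x ^ 2) x := by
  simpa [one_div, neg_div, Pi.inv_def] using (hasDerivAt_cosh x).inv (cosh_pos x).ne'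

theorem deriv_one_div_cosh : deriv (fun y => 1 / cosh y) = fun x => -sinh x / cosh x ^ 2 :=
  funext fun x => (hasDerivAt_one_div_cosh x).deriv

theorem hasDerivAt_neg_sinh_div_cosh_sq (x : ℝ) :
    HasDerivAt (fun y => -sinh y / cosh y ^ 2) ((2 * sinh x ^ 2 - cosh x ^ 2) / cosh x ^ 3) x := by
  have hc : cosh x ≠ 0 := (cosh_pos x).ne'
  have hquot := (hasDerivAt_sinh x).neg.div ((hasDerivAt_cosh x).pow 2) (pow_ne_zero 2 hc)
  refine hquot.congr_deriv ?_
  simp only [Pi.pow_apply, Pi.neg_apply]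
  field_simp
  ring

theorem eq14Lhs_eq_mul_eq9Lhs {f : ℝ → ℝ} (hf : ContDiffOn ℝ 2 f (Ioo 0 1)) {x : ℝ}
    (hx : 0 < x) :
    eq14Lhs (fun y => f (1 / cosh y) - π / 2) x =
      sinh x ^ 2 / cosh x ^ 4 * eq9Lhs f (1 / cosh x) := by
  have hρ : ∀ᶠ y in 𝓝 x, 1 / cosh y ∈ Ioo (0 : ℝ) 1 :=
    (eventually_gt_nhds hx).mono fun y hy => mapsTo_one_div_cosh hy
  have hdf : ∀ᶠ y in 𝓝 x, DifferentiableAt ℝ f (1 / cosh y) :=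
    hρ.mono fun y hy =>
      (hf.differentiableOn (by norm_num)).differentiableAt (Ioo_mem_nhds hy.1 hy.2)
  have hd2f : DifferentiableAt ℝ (deriv f) (1 / cosh x) :=
    ((hf.deriv_of_isOpen isOpen_Ioo (m := 1) (by norm_num)).differentiableOn
      one_ne_zero).differentiableAt (Ioo_mem_nhds hρ.self_of_nhds.1 hρ.self_of_nhds.2)
  have hd2g : DifferentiableAt ℝ (deriv fun y => 1 / cosh y) x := by
    rw [deriv_one_div_cosh]
    exact (hasDerivAt_neg_sinh_div_cosh_sq x).differentiableAt
  have hsecond := deriv_deriv_comp hdf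
    (Eventually.of_forall fun y => (hasDerivAt_one_div_cosh y).differentiableAt) hd2f hd2g
  have hfirst :
      deriv (fun y => f (1 / cosh y)) x = deriv f (1 / cosh x) * (-sinh x / cosh x ^ 2) :=
    (hdf.self_of_nhds.hasDerivAt.comp x (hasDerivAt_one_div_cosh x)).deriv
  have hsin : sin (2 * (f (1 / cosh x) - π / 2)) = -sin (2 * f (1 / cosh x)) := by
    rw [show 2 * (f (1 / cosh x) - π / 2) = 2 * f (1 / cosh x) - π by ring, sin_sub_pi]
  have hc : cosh x ≠ 0 := (cosh_pos x).ne'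
  have hs : sinh x ≠ 0 := (sinh_pos_iff.2 hx).ne'
  have h1ρ : 1 - (1 / cosh x) ^ 2 = sinh x ^ 2 / cosh x ^ 2 := by
    field_simp
    linarith [cosh_sq x]
  simp only [eq14Lhs, eq9Lhs, deriv_sub_const_fun]
  rw [hsecond, hfirst, hsin, deriv_one_div_cosh, (hasDerivAt_neg_sinh_div_cosh_sq x).deriv, h1ρ]
  field_simp
  ring

/-- The change of variables (13): with `ρ = 1/cosh x` and `h(x) = f(ρ) - π/2`, a `C²`
function `f` satisfies equation (9), `f'' + (2/ρ) f' - sin(2f)/(ρ²(1-ρ²)) = 0` on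
`(0,1)`, if and only if `h` satisfies equation (14), `h'' - coth(x) h' + sin(2h) = 0`
on `(0,∞)`. -/
theorem change_of_variables_eq9_iff_eq14
    (f : ℝ → ℝ) (hf : ContDiffOn ℝ 2 f (Ioo 0 1)) :
    (∀ ρ ∈ Ioo (0:ℝ) 1,
      deriv (deriv f) ρ + 2 / ρ * deriv f ρ
        - Real.sin (2 * f ρ) / (ρ ^ 2 * (1 - ρ ^ 2)) = 0) ↔
    (∀ x ∈ Ioi (0:ℝ),
      deriv (deriv (fun y => f (1 / Real.cosh y) - π / 2)) x
        - (Real.cosh x / Real.sinh x)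
            * deriv (fun y => f (1 / Real.cosh y) - π / 2) x
        + Real.sin (2 * (f (1 / Real.cosh x) - π / 2)) = 0) := by
  change (∀ ρ ∈ Ioo (0:ℝ) 1, eq9Lhs f ρ = 0) ↔
    ∀ x ∈ Ioi (0:ℝ), eq14Lhs (fun y => f (1 / cosh y) - π / 2) x = 0
  rw [surjOn_one_div_cosh.forall mapsTo_one_div_cosh]
  refine forall₂_congr fun x hx => ?_
  have hfactor : sinh x ^ 2 / cosh x ^ 4 ≠ 0 := by
    have := sinh_pos_iff.2 hx
    positivity
  rw [eq14Lhs_eq_mul_eq9Lhs hf hx, mul_eq_zero_iff_left hfactor]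
end

section
/- Let f : (0,1) → ℝ be a C³ solution of f''(ρ) + (2/ρ) f'(ρ) − sin(2 f(ρ)) / (ρ² (1 − ρ²)) = 0 on (0,1), and define v(ρ) = ρ √(1 − ρ²) f'(ρ). Then v satisfies the linearized (gauge mode) equation −((1−ρ²)²/ρ²) · (d/dρ)(ρ² v'(ρ)) + (2 (1−ρ²) cos(2 f(ρ)) / ρ²) · v(ρ) = v(ρ) for all ρ ∈ (0,1); i.e., v solves the eigenvalue equation A v = (1 − λ²) v with λ = 0, where A = −((1−ρ²)²/ρ²) d/dρ (ρ² d/dρ) + 2(1−ρ²) cos(2f)/ρ². -/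
open Real Set Filter Topology

/-- The gauge mode (36): if `f` is a `C³` solution of equation (9) on `(0,1)`, then
`v(ρ) = ρ √(1-ρ²) f'(ρ)` satisfies the eigenvalue equation (31) with `λ = 0`:
`-((1-ρ²)²/ρ²) (ρ² v')' + (2(1-ρ²) cos(2f)/ρ²) v = v`. -/
theorem gauge_mode_solves_linearized_equation
    (f : ℝ → ℝ) (hf : ContDiffOn ℝ 3 f (Ioo 0 1))
    (hode : ∀ ρ ∈ Ioo (0:ℝ) 1,
      deriv (deriv f) ρ + 2 / ρ * deriv f ρ
        - Real.sin (2 * f ρ) / (ρ ^ 2 * (1 - ρ ^ 2)) = 0) :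
    ∀ ρ ∈ Ioo (0:ℝ) 1,
      - ((1 - ρ ^ 2) ^ 2 / ρ ^ 2)
          * deriv (fun σ => σ ^ 2
              * deriv (fun τ => τ * Real.sqrt (1 - τ ^ 2) * deriv f τ) σ) ρ
        + (2 * (1 - ρ ^ 2) * Real.cos (2 * f ρ) / ρ ^ 2)
            * (ρ * Real.sqrt (1 - ρ ^ 2) * deriv f ρ)
      = ρ * Real.sqrt (1 - ρ ^ 2) * deriv f ρ := by
  have hopen : IsOpen (Ioo (0:ℝ) 1) := isOpen_Ioo
  have hpos : ∀ σ ∈ Ioo (0:ℝ) 1, (0:ℝ) < 1 - σ ^ 2 := by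
    rintro σ ⟨h0, h1⟩; nlinarith
  have hf1 : ContDiffOn ℝ 2 (deriv f) (Ioo 0 1) :=
    hf.deriv_of_isOpen hopen (by norm_num)
  have hf2 : ContDiffOn ℝ 1 (deriv (deriv f)) (Ioo 0 1) :=
    hf1.deriv_of_isOpen hopen (by norm_num)
  have hdf : ∀ σ ∈ Ioo (0:ℝ) 1, HasDerivAt f (deriv f σ) σ := fun σ hσ =>
    ((hf.differentiableOn (by norm_num)).differentiableAt (hopen.mem_nhds hσ)).hasDerivAt
  have hdg : ∀ σ ∈ Ioo (0:ℝ) 1, HasDerivAt (deriv f) (deriv (deriv f) σ) σ := fun σ hσ =>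
    ((hf1.differentiableOn (by norm_num)).differentiableAt (hopen.mem_nhds hσ)).hasDerivAt
  have hdh : ∀ σ ∈ Ioo (0:ℝ) 1,
      HasDerivAt (deriv (deriv f)) (deriv (deriv (deriv f)) σ) σ := fun σ hσ =>
    ((hf2.differentiableOn (by norm_num)).differentiableAt (hopen.mem_nhds hσ)).hasDerivAt
  have hsder : ∀ σ ∈ Ioo (0:ℝ) 1,
      HasDerivAt (fun τ => Real.sqrt (1 - τ ^ 2)) (-σ / Real.sqrt (1 - σ ^ 2)) σ := by
    intro σ hσ
    have h1 : HasDerivAt (fun τ : ℝ => 1 - τ ^ 2) (-(2 * σ)) σ := by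
      simpa using ((hasDerivAt_pow 2 σ).const_sub 1)
    have h2 := h1.sqrt (ne_of_gt (hpos σ hσ))
    convert h2 using 1
    have hs0 : Real.sqrt (1 - σ ^ 2) ≠ 0 := (Real.sqrt_pos.mpr (hpos σ hσ)).ne'
    field_simp
  have hV : ∀ σ ∈ Ioo (0:ℝ) 1,
      HasDerivAt (fun τ => τ * Real.sqrt (1 - τ ^ 2) * deriv f τ)
        ((1 * Real.sqrt (1 - σ ^ 2) + σ * (-σ / Real.sqrt (1 - σ ^ 2))) * deriv f σ
          + σ * Real.sqrt (1 - σ ^ 2) * deriv (deriv f) σ) σ := fun σ hσ =>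
    ((hasDerivAt_id σ).mul (hsder σ hσ)).mul (hdg σ hσ)
  intro ρ hρ
  obtain ⟨hρ0, hρ1⟩ := hρ
  have hρmem : ρ ∈ Ioo (0:ℝ) 1 := ⟨hρ0, hρ1⟩
  have hρne : ρ ≠ 0 := ne_of_gt hρ0
  have hupos := hpos ρ hρmem
  have hune : (1:ℝ) - ρ ^ 2 ≠ 0 := ne_of_gt hupos
  have hsp : (0:ℝ) < Real.sqrt (1 - ρ ^ 2) := Real.sqrt_pos.mpr hupos
  have hsne : Real.sqrt (1 - ρ ^ 2) ≠ 0 := hsp.ne'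
  have hs2 : Real.sqrt (1 - ρ ^ 2) ^ 2 = 1 - ρ ^ 2 := Real.sq_sqrt hupos.le
  have hev : (fun σ => σ ^ 2 * deriv (fun τ => τ * Real.sqrt (1 - τ ^ 2) * deriv f τ) σ)
      =ᶠ[𝓝 ρ] (fun σ => σ ^ 2 *
        ((1 * Real.sqrt (1 - σ ^ 2) + σ * (-σ / Real.sqrt (1 - σ ^ 2))) * deriv f σ
          + σ * Real.sqrt (1 - σ ^ 2) * deriv (deriv f) σ)) := by
    filter_upwards [hopen.mem_nhds hρmem] with σ hσ
    rw [(hV σ hσ).deriv]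
  have hdiv : HasDerivAt (fun σ : ℝ => -σ / Real.sqrt (1 - σ ^ 2))
      (((-1) * Real.sqrt (1 - ρ ^ 2) - (-ρ) * (-ρ / Real.sqrt (1 - ρ ^ 2)))
        / Real.sqrt (1 - ρ ^ 2) ^ 2) ρ :=
    ((hasDerivAt_id ρ).neg).div (hsder ρ hρmem) hsne
  have hVd := ((((hsder ρ hρmem).const_mul 1).add
      ((hasDerivAt_id ρ).mul hdiv)).mul (hdg ρ hρmem)).add
      ((((hasDerivAt_id ρ).mul (hsder ρ hρmem)).mul (hdh ρ hρmem)))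
  have hW := (hasDerivAt_pow 2 ρ).mul hVd
  have hWo := hW.congr_of_eventuallyEq hev
  rw [hWo.deriv]
  -- second derivative from the ODE
  have hH : deriv (deriv f) ρ
      = Real.sin (2 * f ρ) / (ρ ^ 2 * (1 - ρ ^ 2)) - 2 / ρ * deriv f ρ := by
    have := hode ρ hρmem; linarith
  have hevH : deriv (deriv f) =ᶠ[𝓝 ρ]
      (fun σ => Real.sin (2 * f σ) / (σ ^ 2 * (1 - σ ^ 2)) - 2 / σ * deriv f σ) := by
    filter_upwards [hopen.mem_nhds hρmem] with σ hσ
    have := hode σ hσ; linarith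
  have hsin : HasDerivAt (fun σ => Real.sin (2 * f σ))
      (Real.cos (2 * f ρ) * (2 * deriv f ρ)) ρ := ((hdf ρ hρmem).const_mul 2).sin
  have hden := (hasDerivAt_pow 2 ρ).mul
    (by simpa using ((hasDerivAt_pow 2 ρ).const_sub 1) :
      HasDerivAt (fun σ : ℝ => 1 - σ ^ 2) (-(2 * ρ)) ρ)
  have hS := (hsin.div hden (mul_ne_zero (pow_ne_zero 2 hρne) hune)).sub
    (((hasDerivAt_const ρ (2:ℝ)).div (hasDerivAt_id ρ) hρne).mul (hdg ρ hρmem))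
  have hK : deriv (deriv (deriv f)) ρ = _ := hevH.deriv_eq.trans hS.deriv
  rw [hK, hH]
  simp only [Pi.mul_apply, Pi.add_apply, Pi.div_apply, id]
  rw [hH]
  rw [← hs2, Real.sqrt_sq hsp.le]
  set s := Real.sqrt (1 - ρ ^ 2) with hsdef
  field_simp
  linear_combination (deriv f ρ * ρ ^ 4) * hs2
end

section
/- Let m ≥ 3 be an integer and k > 0 a real number with 4k > (m−2)². Then every nontrivial solution H of the linear ODE H''(x) − (m−2) coth(x) H'(x) + 2k H(x) = 0 on (0,∞) with H(x)/x^{m−1} → 1 as x → 0⁺ has infinitely many zeros on (0,∞). -/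
/-!
Where `H ≠ 0`, the logarithmic derivative `W = H'/H` of a solution of `H'' = p H' - q H` satisfies
the Riccati equation `W' = p W - q - W²`. Once the discriminant `p²/4 - q` of the characteristic
polynomial stays below `-ε < 0`, which happens near `∞` because `coth x → 1` and
`(m-2)² < 4k`, this gives `W' ≤ -ε`, so `W` becomes negative, and afterwards `W' ≤ -W²`, so
`-1/W` decreases at rate at least `1` while staying positive, which is absurd.
Hence `H` has a zero beyond every point.
-/

open Real Set Filter Topology

lemma image_sub_le_mul_sub_of_hasDerivAt_le {f f' : ℝ → ℝ} {a C : ℝ}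
    (hf : ∀ x ∈ Ici a, HasDerivAt f (f' x) x) (hC : ∀ x ∈ Ici a, f' x ≤ C)
    {x y : ℝ} (hx : a ≤ x) (hxy : x ≤ y) : f y - f x ≤ C * (y - x) :=
  (convex_Ici a).image_sub_le_mul_sub_of_deriv_le
    (fun z hz => (hf z hz).continuousAt.continuousWithinAt)
    (fun z hz => (hf z (interior_subset hz)).differentiableAt.differentiableWithinAt)
    (fun z hz => (hf z (interior_subset hz)).deriv ▸ hC z (interior_subset hz))
    x hx y (hx.trans hxy) hxy

lemma false_of_riccati_ineq {W W' : ℝ → ℝ} {a ε : ℝ} (hε : 0 < ε)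
    (hW : ∀ x ∈ Ici a, HasDerivAt W (W' x) x) (hlin : ∀ x ∈ Ici a, W' x ≤ -ε)
    (hsq : ∀ x ∈ Ici a, W x ≤ 0 → W' x ≤ -W x ^ 2) : False := by
  set b := a + (|W a| + 1) / ε
  have hab : a ≤ b := le_add_of_nonneg_right (by positivity)
  have hWneg : ∀ x ∈ Ici b, W x < 0 := by
    intro x hx
    have hdecay := image_sub_le_mul_sub_of_hasDerivAt_le hW hlin le_rfl (hab.trans hx)
    have hεb : ε * (b - a) = |W a| + 1 := by
      rw [show b - a = (|W a| + 1) / ε by ring]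
      field_simp
    nlinarith [le_abs_self (W a), mem_Ici.1 hx]
  set U : ℝ → ℝ := fun x => -(W x)⁻¹
  have hU : ∀ x ∈ Ici b, HasDerivAt U (-(-W' x / W x ^ 2)) x :=
    fun x hx => ((hW x (Ici_subset_Ici.2 hab hx)).inv (hWneg x hx).ne).neg
  have hU' : ∀ x ∈ Ici b, -(-W' x / W x ^ 2) ≤ -1 := by
    intro x hx
    have hW2 : 0 < W x ^ 2 := by nlinarith [hWneg x hx]
    rw [neg_div, neg_neg, div_le_iff₀ hW2]
    linarith [hsq x (Ici_subset_Ici.2 hab hx) (hWneg x hx).le]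
  have hUpos : ∀ x ∈ Ici b, 0 < U x := fun x hx => neg_pos.2 (inv_lt_zero.2 (hWneg x hx))
  have hfar : b ≤ b + U b + 1 := by linarith [hUpos b self_mem_Ici]
  have hdrop := image_sub_le_mul_sub_of_hasDerivAt_le hU hU' le_rfl hfar
  linarith [hUpos _ hfar]

lemma hasDerivAt_riccati_of_ode {H H' H'' : ℝ → ℝ} {x p q : ℝ}
    (hd1 : HasDerivAt H (H' x) x) (hd2 : HasDerivAt H' (H'' x) x)
    (hode : H'' x = p * H' x - q * H x) (hH : H x ≠ 0) :
    HasDerivAt (fun y => H' y / H y) (p * (H' x / H x) - q - (H' x / H x) ^ 2) x := by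
  refine (hd2.div hd1 hH).congr_deriv ?_
  rw [hode]
  field_simp

lemma exists_zero_Ici_of_discriminant_neg {H H' H'' p q : ℝ → ℝ} {a ε : ℝ} (hε : 0 < ε)
    (hd1 : ∀ x ∈ Ici a, HasDerivAt H (H' x) x) (hd2 : ∀ x ∈ Ici a, HasDerivAt H' (H'' x) x)
    (hode : ∀ x ∈ Ici a, H'' x = p x * H' x - q x * H x)
    (hp : ∀ x ∈ Ici a, 0 ≤ p x) (hdisc : ∀ x ∈ Ici a, p x ^ 2 / 4 + ε ≤ q x) :
    ∃ x ∈ Ici a, H x = 0 := by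
  by_contra! hH
  set W : ℝ → ℝ := fun y => H' y / H y
  refine false_of_riccati_ineq (W := W) hε
    (fun x hx => hasDerivAt_riccati_of_ode (hd1 x hx) (hd2 x hx) (hode x hx) (hH x hx))
    (fun x hx => ?_) (fun x hx hWx => ?_)
  · nlinarith [sq_nonneg (W x - p x / 2), hdisc x hx]
  · nlinarith [mul_nonpos_of_nonneg_of_nonpos (hp x hx) hWx, hdisc x hx, sq_nonneg (p x)]

lemma tendsto_cosh_div_sinh_atTop : Tendsto (fun x => cosh x / sinh x) atTop (𝓝 1) := by
  have hsinh : Tendsto sinh atTop atTop :=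
    tendsto_atTop_mono' _ ((eventually_ge_atTop 0).mono fun _ => self_le_sinh_iff.2) tendsto_id
  have h : Tendsto (fun x => 1 + exp (-x) / sinh x) atTop (𝓝 (1 + 0)) :=
    tendsto_const_nhds.add (tendsto_exp_neg_atTop_nhds_zero.div_atTop hsinh)
  rw [add_zero] at h
  refine h.congr' ?_
  filter_upwards [eventually_gt_atTop 0] with x hx
  rw [← cosh_sub_sinh x]
  field_simp [(sinh_pos_iff.2 hx).ne']
  ring

theorem higher_dimensional_linearized_solution_oscillates_general
    (m : ℕ) (hm : 3 ≤ m) (k : ℝ)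
    (hosc : ((m : ℝ) - 2) ^ 2 < 4 * k)
    (H H' H'' : ℝ → ℝ)
    (hd1 : ∀ x ∈ Ioi (0:ℝ), HasDerivAt H (H' x) x)
    (hd2 : ∀ x ∈ Ioi (0:ℝ), HasDerivAt H' (H'' x) x)
    (hode : ∀ x ∈ Ioi (0:ℝ),
      H'' x - ((m : ℝ) - 2) * (Real.cosh x / Real.sinh x) * H' x + 2 * k * H x = 0) :
    {x ∈ Ioi (0:ℝ) | H x = 0}.Infinite := by
  have hc : (0 : ℝ) ≤ m - 2 := by
    have : (3 : ℝ) ≤ m := by exact_mod_cast hm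
    linarith
  have hk : 0 < k := by nlinarith [sq_nonneg ((m : ℝ) - 2)]
  have hcoth : Tendsto (fun x => ((m - 2) * (cosh x / sinh x)) ^ 2) atTop (𝓝 (((m : ℝ) - 2) ^ 2)) :=
    by simpa using (tendsto_cosh_div_sinh_atTop.const_mul ((m : ℝ) - 2)).pow 2
  have hfar : ∀ᶠ x in atTop, 0 < x ∧ ((m - 2) * (cosh x / sinh x)) ^ 2 ≤ (m - 2) ^ 2 + 4 * k :=
    (eventually_gt_atTop 0).and (hcoth.eventually (ge_mem_nhds (by linarith)))
  refine Set.infinite_of_not_bddAbove (not_bddAbove_iff.2 fun B => ?_)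
  obtain ⟨a, ha⟩ := eventually_atTop.1 (hfar.and (eventually_gt_atTop B))
  obtain ⟨x, hxa, hx⟩ := exists_zero_Ici_of_discriminant_neg (a := a)
    (p := fun x => (m - 2) * (cosh x / sinh x)) (q := fun _ => 2 * k)
    (sub_pos.2 (by linarith : ((m : ℝ) - 2) ^ 2 / 4 < k))
    (fun x hx => hd1 x (ha x hx).1.1) (fun x hx => hd2 x (ha x hx).1.1)
    (fun x hx => by linarith [hode x (ha x hx).1.1])
    (fun x hx => mul_nonneg hc (div_pos (cosh_pos x) (sinh_pos_iff.2 (ha x hx).1.1)).le)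
    (fun x hx => by linarith [(ha x hx).1.2])
  exact ⟨x, ⟨(ha x hxa).1.1, hx⟩, (ha x hxa).2⟩

/-- Oscillation of the higher-dimensional linearized equation (42): for integer
`m ≥ 3` and real `k > 0` with `4k > (m-2)²`, the solution of
`H'' - (m-2) coth(x) H' + 2k H = 0` on `(0,∞)` with `H(x) ~ x^(m-1)` near `0`
has infinitely many zeros. -/
theorem higher_dimensional_linearized_solution_oscillates
    (m : ℕ) (hm : 3 ≤ m) (k : ℝ) (hk : 0 < k)
    (hosc : ((m : ℝ) - 2) ^ 2 < 4 * k)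
    (H H' H'' : ℝ → ℝ)
    (hd1 : ∀ x ∈ Ioi (0:ℝ), HasDerivAt H (H' x) x)
    (hd2 : ∀ x ∈ Ioi (0:ℝ), HasDerivAt H' (H'' x) x)
    (hode : ∀ x ∈ Ioi (0:ℝ),
      H'' x - ((m : ℝ) - 2) * (Real.cosh x / Real.sinh x) * H' x + 2 * k * H x = 0)
    (hasymp : Filter.Tendsto (fun x => H x / x ^ (m - 1)) (𝓝[>] (0:ℝ)) (𝓝 1)) :
    {x ∈ Ioi (0:ℝ) | H x = 0}.Infinite :=
  higher_dimensional_linearized_solution_oscillates_general m hm k hosc H H' H'' hd1 hd2 hode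
end

section
/- Let h be a C² solution of h''(x) − coth(x) h'(x) + sin(2 h(x)) = 0 on (0,∞) with |h(x)| < π/2 for all x > 0 and lim_{x→∞} h(x) = −π/2. Then there exists a real constant a such that e^x (h(x) + π/2) → a as x → ∞; i.e., h approaches −π/2 along the one-dimensional stable manifold h(x) ~ −π/2 + a e^{−x}. -/
set_option maxHeartbeats 1600000

open Real Set Filter Topology MeasureTheory

section StableManifoldAux

lemma mono_Ici {f f' : ℝ → ℝ} {a : ℝ}
    (hf : ∀ x ∈ Ici a, HasDerivAt f (f' x) x)
    (h0 : ∀ x ∈ Ici a, 0 ≤ f' x) : MonotoneOn f (Ici a) := by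
  apply monotoneOn_of_deriv_nonneg (convex_Ici a)
  · exact fun x hx => (hf x hx).continuousAt.continuousWithinAt
  · intro x hx
    rw [interior_Ici] at hx
    exact (hf x (mem_Ioi.1 hx).le).differentiableAt.differentiableWithinAt
  · intro x hx
    rw [interior_Ici] at hx
    rw [(hf x (mem_Ioi.1 hx).le).deriv]
    exact h0 x (mem_Ioi.1 hx).le

-- Energy estimate: (g')² ≤ 1 - cos(2g) on (0,∞)
lemma energy_bound {g g' g'' : ℝ → ℝ}
    (hd1 : ∀ x ∈ Ioi (0:ℝ), HasDerivAt g (g' x) x)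
    (hd2 : ∀ x ∈ Ioi (0:ℝ), HasDerivAt g' (g'' x) x)
    (hode : ∀ x ∈ Ioi (0:ℝ), g'' x = (Real.cosh x / Real.sinh x) * g' x + Real.sin (2 * g x))
    (hpos : ∀ x > (0:ℝ), 0 < g x) (hlt : ∀ x > (0:ℝ), g x < π) :
    ∀ x > (0:ℝ), (g' x)^2 ≤ 1 - Real.cos (2 * g x) := by
  intro x0 hx0
  by_contra hc
  push_neg at hc
  set F : ℝ → ℝ := fun x => (g' x)^2/2 + Real.cos (2 * g x)/2 with hF
  -- derivative of F
  have hdF : ∀ x ∈ Ici x0, HasDerivAt F ((Real.cosh x / Real.sinh x) * (g' x)^2) x := by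
    intro x hx
    have hxpos : x ∈ Ioi (0:ℝ) := lt_of_lt_of_le hx0 hx
    have h1 : HasDerivAt (fun x => (g' x)^2/2) (g'' x * g' x) x := by
      have := ((hd2 x hxpos).pow 2).div_const 2
      refine this.congr_deriv ?_
      ring
    have h2 : HasDerivAt (fun x => Real.cos (2 * g x)/2)
        (-Real.sin (2 * g x) * g' x) x := by
      have := (((hd1 x hxpos).const_mul 2).cos).div_const 2
      refine this.congr_deriv ?_
      ring
    have := h1.add h2
    refine this.congr_deriv ?_
    rw [hode x hxpos]
    ring
  have hFmono : MonotoneOn F (Ici x0) := by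
    apply mono_Ici hdF
    intro x hx
    have hxpos : (0:ℝ) < x := lt_of_lt_of_le hx0 hx
    have := Real.sinh_pos_iff.2 hxpos
    have := (Real.cosh_pos (x := x)).le
    positivity
  have hc2pos : 0 < (g' x0)^2 + Real.cos (2 * g x0) - 1 := by linarith
  -- (g' x)^2 ≥ 2 c2 for x ≥ x0
  have hsq : ∀ x ∈ Ici x0, (g' x0)^2 + Real.cos (2 * g x0) - 1 ≤ (g' x)^2 := by
    intro x hx
    have h1 : F x0 ≤ F x := hFmono self_mem_Ici hx (mem_Ici.1 hx)
    have h2 : Real.cos (2 * g x) ≤ 1 := Real.cos_le_one _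
    have h1' : (g' x0)^2/2 + Real.cos (2 * g x0)/2 ≤ (g' x)^2/2 + Real.cos (2 * g x)/2 := h1
    linarith
  -- g' is continuous on Ici x0
  have hcont' : ContinuousOn g' (Ici x0) := fun x hx =>
    (hd2 x (lt_of_lt_of_le hx0 hx)).continuousAt.continuousWithinAt
  set m : ℝ := Real.sqrt ((g' x0)^2 + Real.cos (2 * g x0) - 1) with hm
  have hmpos : 0 < m := Real.sqrt_pos.2 hc2pos
  have hmabs : ∀ x ∈ Ici x0, m ≤ |g' x| := by
    intro x hx
    rw [hm]
    rw [show |g' x| = Real.sqrt ((g' x)^2) by rw [Real.sqrt_sq_eq_abs]]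
    exact Real.sqrt_le_sqrt (hsq x hx)
  -- g' has constant sign on Ici x0
  have hne : ∀ x ∈ Ici x0, g' x ≠ 0 := by
    intro x hx h0
    have := hmabs x hx
    rw [h0] at this
    simp at this
    linarith
  rcases lt_or_gt_of_ne (hne x0 self_mem_Ici) with hneg | hposs
  · -- g' x0 < 0 : g' ≤ -m on Ici x0
    have hsign : ∀ x ∈ Ici x0, g' x ≤ -m := by
      intro x hx
      by_contra hcc
      push_neg at hcc
      -- then g' x > -m; since |g' x| ≥ m, g' x ≥ m > 0; IVT gives a zero
      have hgx : m ≤ g' x := by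
        rcases abs_cases (g' x) with ⟨h1,h2⟩|⟨h1,h2⟩
        · linarith [hmabs x hx]
        · linarith [hmabs x hx]
      have hx0x : x0 ≤ x := hx
      have : (0:ℝ) ∈ g' '' Icc x0 x := by
        apply intermediate_value_Icc hx0x (hcont'.mono (Icc_subset_Ici_self))
        constructor <;> [linarith; linarith]
      obtain ⟨z, hz, hz0⟩ := this
      exact hne z (Icc_subset_Ici_self hz) hz0
    -- then g decreases linearly: g x ≤ g x0 - m (x - x0), contradiction with g > 0
    have hmono : MonotoneOn (fun x => -g x - m * x) (Ici x0) := by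
      apply mono_Ici (f' := fun x => -g' x - m)
      · intro x hx
        exact ((hd1 x (lt_of_lt_of_le hx0 hx)).neg).sub ((hasDerivAt_id x).const_mul m)
        |>.congr_deriv (by ring)
      · intro x hx
        linarith [hsign x hx]
    set X := x0 + (g x0 + 1)/m with hX
    have hXmem : X ∈ Ici x0 := by
      rw [hX]
      simp only [mem_Ici, le_add_iff_nonneg_right]
      exact div_nonneg (by linarith [hpos x0 hx0]) hmpos.le
    have := hmono self_mem_Ici hXmem (mem_Ici.1 hXmem)
    simp only at this
    have hgX : 0 < g X := hpos X (lt_of_lt_of_le hx0 hXmem)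
    have : -g X - m * X ≥ -g x0 - m * x0 := this
    rw [hX] at this
    have hme : m * ((g x0 + 1)/m) = g x0 + 1 := by field_simp
    nlinarith
  · -- g' x0 > 0 : symmetric
    have hsign : ∀ x ∈ Ici x0, m ≤ g' x := by
      intro x hx
      by_contra hcc
      push_neg at hcc
      have hgx : g' x ≤ -m := by
        rcases abs_cases (g' x) with ⟨h1,h2⟩|⟨h1,h2⟩
        · linarith [hmabs x hx]
        · linarith [hmabs x hx]
      have hx0x : x0 ≤ x := hx
      have : (0:ℝ) ∈ g' '' Icc x0 x := by
        apply intermediate_value_Icc' hx0x (hcont'.mono (Icc_subset_Ici_self))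
        constructor <;> [linarith; linarith]
      obtain ⟨z, hz, hz0⟩ := this
      exact hne z (Icc_subset_Ici_self hz) hz0
    have hmono : MonotoneOn (fun x => g x - m * x) (Ici x0) := by
      apply mono_Ici (f' := fun x => g' x - m)
      · intro x hx
        exact ((hd1 x (lt_of_lt_of_le hx0 hx))).sub ((hasDerivAt_id x).const_mul m)
        |>.congr_deriv (by ring)
      · intro x hx
        linarith [hsign x hx]
    set X := x0 + (π + 1)/m with hX
    have hXmem : X ∈ Ici x0 := by
      rw [hX]
      simp only [mem_Ici, le_add_iff_nonneg_right]
      exact div_nonneg (by linarith [Real.pi_pos]) hmpos.le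
    have := hmono self_mem_Ici hXmem (mem_Ici.1 hXmem)
    simp only at this
    have hgX : g X < π := hlt X (lt_of_lt_of_le hx0 hXmem)
    rw [hX] at this
    have hme : m * ((π + 1)/m) = π + 1 := by field_simp
    have hg0 : 0 < g x0 := hpos x0 hx0
    nlinarith


lemma anti_Ici {f f' : ℝ → ℝ} {a : ℝ}
    (hf : ∀ x ∈ Ici a, HasDerivAt f (f' x) x)
    (h0 : ∀ x ∈ Ici a, f' x ≤ 0) : AntitoneOn f (Ici a) := by
  apply antitoneOn_of_deriv_nonpos (convex_Ici a)
  · exact fun x hx => (hf x hx).continuousAt.continuousWithinAt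
  · intro x hx
    rw [interior_Ici] at hx
    exact (hf x (mem_Ioi.1 hx).le).differentiableAt.differentiableWithinAt
  · intro x hx
    rw [interior_Ici] at hx
    rw [(hf x (mem_Ioi.1 hx).le).deriv]
    exact h0 x (mem_Ioi.1 hx).le

-- |g'| ≤ (3/2) g given energy bound
lemma abs_deriv_le {g g' : ℝ → ℝ}
    (he : ∀ x > (0:ℝ), (g' x)^2 ≤ 1 - Real.cos (2 * g x))
    (hpos : ∀ x > (0:ℝ), 0 < g x) (hlt : ∀ x > (0:ℝ), g x < π) :
    ∀ x > (0:ℝ), |g' x| ≤ (3/2) * g x := by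
  intro x hx
  have h1 := he x hx
  have hg0 := hpos x hx
  have hgpi := hlt x hx
  have hsin : Real.sin (g x) ≤ g x := Real.sin_le hg0.le
  have hsin0 : 0 ≤ Real.sin (g x) := Real.sin_nonneg_of_nonneg_of_le_pi hg0.le hgpi.le
  have hcos : Real.cos (2 * g x) = 1 - 2 * Real.sin (g x)^2 := by
    rw [Real.cos_two_mul]
    nlinarith [Real.sin_sq_add_cos_sq (g x)]
  have hsq : (g' x)^2 ≤ ((3/2) * g x)^2 := by nlinarith
  calc |g' x| = Real.sqrt ((g' x)^2) := (Real.sqrt_sq_eq_abs _).symm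
    _ ≤ Real.sqrt (((3/2) * g x)^2) := Real.sqrt_le_sqrt hsq
    _ = |(3/2) * g x| := Real.sqrt_sq_eq_abs _
    _ = (3/2) * g x := abs_of_nonneg (by linarith)

-- growth comparison g t ≤ g x e^{1.5(t-x)}
lemma growth_le {g g' : ℝ → ℝ}
    (hd1 : ∀ x ∈ Ioi (0:ℝ), HasDerivAt g (g' x) x)
    (habs : ∀ x > (0:ℝ), |g' x| ≤ (3/2) * g x) :
    ∀ x t : ℝ, 0 < x → x ≤ t → g t ≤ g x * Real.exp ((3/2) * (t - x)) := by
  intro x t hx hxt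
  have hanti : AntitoneOn (fun s => Real.exp (-(3/2) * s) * g s) (Ici x) := by
    apply anti_Ici (f' := fun s => Real.exp (-(3/2) * s) * (g' s - (3/2) * g s))
    · intro s hs
      have hs0 : s ∈ Ioi (0:ℝ) := lt_of_lt_of_le hx hs
      have h1 : HasDerivAt (fun s : ℝ => Real.exp (-(3/2) * s))
          (Real.exp (-(3/2) * s) * (-(3/2))) s := by
        simpa using ((hasDerivAt_id s).const_mul (-(3/2) : ℝ)).exp
      have := h1.mul (hd1 s hs0)
      refine this.congr_deriv ?_
      ring
    · intro s hs
      have hs0 : (0:ℝ) < s := lt_of_lt_of_le hx hs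
      have h2 := (abs_le.1 (habs s hs0)).2
      have := Real.exp_pos (-(3/2) * s)
      nlinarith
  have := hanti self_mem_Ici (mem_Ici.2 hxt) hxt
  simp only at this
  have hep : (0:ℝ) < Real.exp (-(3/2) * t) := Real.exp_pos _
  calc g t = Real.exp (-(3/2) * t) * g t * Real.exp ((3/2) * t) := by
        rw [mul_comm (Real.exp (-(3/2)*t)) (g t), mul_assoc, ← Real.exp_add]
        simp
    _ ≤ Real.exp (-(3/2) * x) * g x * Real.exp ((3/2) * t) := by
        apply mul_le_mul_of_nonneg_right this (Real.exp_pos _).le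
    _ = g x * Real.exp ((3/2) * (t - x)) := by
        rw [mul_comm (Real.exp (-(3/2)*x)) (g x), mul_assoc, ← Real.exp_add]
        ring_nf
-- coth bound
lemma coth_bound : ∀ x ≥ (1:ℝ), 0 ≤ Real.cosh x / Real.sinh x - 1 ∧
    Real.cosh x / Real.sinh x - 1 ≤ 3 * Real.exp (-2 * x) := by
  intro x hx
  have hxpos : (0:ℝ) < x := by linarith
  have hs : 0 < Real.sinh x := Real.sinh_pos_iff.2 hxpos
  have hcs : Real.sinh x ≤ Real.cosh x := by
    have h := Real.cosh_sub_sinh x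
    have := Real.exp_pos (-x)
    linarith
  have hex : (2:ℝ) ≤ Real.exp x := by
    calc (2:ℝ) ≤ Real.exp 1 := by
          have := Real.add_one_le_exp (1:ℝ); linarith
    _ ≤ Real.exp x := Real.exp_le_exp.2 hx
  have hexpos := Real.exp_pos x
  have henx : Real.exp (-x) = 1 / Real.exp x := by
    rw [Real.exp_neg]; ring
  have hsinh : Real.sinh x = (Real.exp x - Real.exp (-x))/2 := Real.sinh_eq x
  have hineq : Real.exp x / 3 ≤ Real.sinh x := by
    rw [hsinh, henx, div_le_div_iff₀ (by norm_num : (0:ℝ)<3) (by norm_num : (0:ℝ)<2)]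
    have h4 : 3 * (1 / Real.exp x) ≤ Real.exp x := by
      rw [mul_one_div, div_le_iff₀ hexpos]
      nlinarith
    nlinarith
  constructor
  · have : 1 ≤ Real.cosh x / Real.sinh x := (one_le_div hs).2 hcs
    linarith
  · have hsub : Real.cosh x - Real.sinh x = Real.exp (-x) := Real.cosh_sub_sinh x
    have : Real.cosh x / Real.sinh x - 1 = Real.exp (-x) / Real.sinh x := by
      rw [div_sub_one hs.ne', hsub]
    rw [this]
    have h2 : Real.exp (-x) / Real.sinh x ≤ Real.exp (-x) / (Real.exp x / 3) :=
      div_le_div_of_nonneg_left (Real.exp_pos _).le (by positivity) hineq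
    calc Real.exp (-x) / Real.sinh x ≤ Real.exp (-x) / (Real.exp x / 3) := h2
      _ = 3 * (Real.exp (-x) / Real.exp x) := by ring
      _ = 3 * Real.exp (-2 * x) := by
          rw [← Real.exp_sub]; ring_nf


lemma E_bound {g g' : ℝ → ℝ}
    (habs : ∀ x > (0:ℝ), |g' x| ≤ (3/2) * g x)
    (hpos : ∀ x > (0:ℝ), 0 < g x) :
    ∀ x ≥ (1:ℝ), g x ≤ 1/2 →
      0 ≤ Real.cosh x / Real.sinh x - 1 →
      Real.cosh x / Real.sinh x - 1 ≤ 3 * Real.exp (-2 * x) →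
      |(Real.cosh x / Real.sinh x - 1) * g' x + (Real.sin (2 * g x) - 2 * g x)|
        ≤ (9/2) * Real.exp (-2 * x) * g x + 2 * (g x)^3 := by
  intro x hx hhalf hc0 hc3
  have hx0 : (0:ℝ) < x := by linarith
  have hg0 := hpos x hx0
  have h1 : |(Real.cosh x / Real.sinh x - 1) * g' x| ≤ (9/2) * Real.exp (-2 * x) * g x := by
    rw [abs_mul, abs_of_nonneg hc0]
    calc (Real.cosh x / Real.sinh x - 1) * |g' x|
        ≤ (3 * Real.exp (-2*x)) * ((3/2) * g x) := by
          apply mul_le_mul hc3 (habs x hx0) (abs_nonneg _)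
          positivity
      _ = (9/2) * Real.exp (-2 * x) * g x := by ring
  have h2 : |Real.sin (2 * g x) - 2 * g x| ≤ 2 * (g x)^3 := by
    have hs0 : (0:ℝ) < 2 * g x := by linarith
    have hs1 : 2 * g x ≤ 1 := by linarith
    have hub : Real.sin (2 * g x) ≤ 2 * g x := Real.sin_le hs0.le
    have hlb : 2 * g x - (2 * g x)^3/4 < Real.sin (2 * g x) :=
      by have := Real.sin_gt_sub_cube hs0; nlinarith [pow_pos hs0 3]
    rw [abs_sub_comm, abs_of_nonneg (by linarith)]
    nlinarith
  calc |(Real.cosh x / Real.sinh x - 1) * g' x + (Real.sin (2 * g x) - 2 * g x)|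
      ≤ |(Real.cosh x / Real.sinh x - 1) * g' x| + |Real.sin (2 * g x) - 2 * g x| :=
        abs_add_le _ _
    _ ≤ (9/2) * Real.exp (-2 * x) * g x + 2 * (g x)^3 := by
        have h3 : 2*(g x)^3 ≤ 2*(g x)^3 := le_refl _
        nlinarith [h1, h2]

lemma exists_X1 {g : ℝ → ℝ}
    (hlim : Tendsto g atTop (𝓝 0)) (hpos : ∀ x > (0:ℝ), 0 < g x) :
    ∃ X₁ : ℝ, 4 ≤ X₁ ∧ ∀ x ≥ X₁,
      (9/2) * Real.exp (-2 * x) * g x + 2 * (g x)^3 ≤ (1/8) * g x ∧ g x ≤ 1/2 := by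
  have hev : ∀ᶠ x in atTop, g x ≤ 1/6 := by
    have := hlim.eventually (eventually_le_nhds (show (0:ℝ) < 1/6 by norm_num))
    exact this
  obtain ⟨N, hN⟩ := eventually_atTop.1 hev
  refine ⟨max N 4, le_max_right _ _, ?_⟩
  intro x hx
  have hxN : N ≤ x := le_trans (le_max_left _ _) hx
  have hx4 : (4:ℝ) ≤ x := le_trans (le_max_right _ _) hx
  have hg6 : g x ≤ 1/6 := hN x hxN
  have hg0 : 0 < g x := hpos x (by linarith)
  constructor
  · -- exp(-2x) ≤ 1/72ish
    have hexp : Real.exp (-2 * x) ≤ 1/256 := by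
      have h8 : (256:ℝ) ≤ Real.exp 8 := by
        have he1 : (2:ℝ) ≤ Real.exp 1 := by
          have := Real.add_one_le_exp (1:ℝ); linarith
        have : Real.exp 8 = Real.exp 1 ^ (8:ℕ) := by
          rw [← Real.exp_nat_mul]; norm_num
        rw [this]
        calc (256:ℝ) = 2^(8:ℕ) := by norm_num
          _ ≤ Real.exp 1 ^ (8:ℕ) := by
              apply pow_le_pow_left₀ (by norm_num) he1
      have h2 : Real.exp (-2*x) ≤ Real.exp (-8) := by
        apply Real.exp_le_exp.2; linarith
      have h3 : Real.exp (-8) = 1/Real.exp 8 := by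
        rw [Real.exp_neg]; ring
      rw [h3] at h2
      have : 1/Real.exp 8 ≤ 1/256 := by
        apply div_le_div_of_nonneg_left (by norm_num) (by norm_num) h8
      linarith
    nlinarith [hexp, sq_nonneg (g x)]
  · linarith

lemma hasDerivAt_exp_neg_div (c : ℝ) (hc : c ≠ 0) (t : ℝ) :
    HasDerivAt (fun t => -Real.exp (-c*t)/c) (Real.exp (-c*t)) t := by
  have h := (((hasDerivAt_id t).const_mul (-c)).exp.neg).div_const c
  refine h.congr_deriv ?_
  field_simp
  rfl

lemma tendsto_exp_neg_div (c : ℝ) (hc : 0 < c) :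
    Tendsto (fun t => -Real.exp (-c*t)/c) atTop (𝓝 0) := by
  have h1 : Tendsto (fun t : ℝ => -c*t) atTop atBot :=
    tendsto_id.const_mul_atTop_of_neg (by linarith)
  have h2 : Tendsto (fun t : ℝ => Real.exp (-c*t)) atTop (𝓝 0) :=
    Real.tendsto_exp_atBot.comp h1
  have := (h2.neg).div_const c
  simpa using this

lemma integral_Ioi_exp_neg {c : ℝ} (hc : 0 < c) (a : ℝ) :
    ∫ t in Ioi a, Real.exp (-c*t) = Real.exp (-c*a)/c := by
  have h := integral_Ioi_of_hasDerivAt_of_tendsto'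
    (f := fun t => -Real.exp (-c*t)/c) (f' := fun t => Real.exp (-c*t)) (a := a) (m := 0)
    (fun x _ => hasDerivAt_exp_neg_div c hc.ne' x)
    (exp_neg_integrableOn_Ioi a hc)
    (tendsto_exp_neg_div c hc)
  rw [h]
  ring

lemma intervalIntegral_exp_neg {c : ℝ} (hc : 0 < c) (a b : ℝ) :
    ∫ t in a..b, Real.exp (-c*t) = (Real.exp (-c*a) - Real.exp (-c*b))/c := by
  have h := intervalIntegral.integral_eq_sub_of_hasDerivAt
    (f := fun t => -Real.exp (-c*t)/c) (f' := fun t => Real.exp (-c*t)) (a := a) (b := b)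
    (fun t _ => hasDerivAt_exp_neg_div c hc.ne' t)
    (((continuous_const.mul continuous_id).rexp).continuousOn.intervalIntegrable)
  rw [h]; ring

lemma main_g {g g' g'' : ℝ → ℝ}
    (hd1 : ∀ x ∈ Ioi (0:ℝ), HasDerivAt g (g' x) x)
    (hd2 : ∀ x ∈ Ioi (0:ℝ), HasDerivAt g' (g'' x) x)
    (hode : ∀ x ∈ Ioi (0:ℝ), g'' x = (Real.cosh x / Real.sinh x) * g' x + Real.sin (2 * g x))
    (hpos : ∀ x > (0:ℝ), 0 < g x) (hlt : ∀ x > (0:ℝ), g x < π)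
    (hlim : Tendsto g atTop (𝓝 0)) :
    ∃ a : ℝ, Tendsto (fun x => Real.exp x * g x) atTop (𝓝 a) := by
  set E : ℝ → ℝ := fun x => (Real.cosh x / Real.sinh x - 1) * g' x
      + (Real.sin (2 * g x) - 2 * g x) with hE
  have habs : ∀ x > (0:ℝ), |g' x| ≤ (3/2) * g x :=
    abs_deriv_le (energy_bound hd1 hd2 hode hpos hlt) hpos hlt
  have hgrow : ∀ x t : ℝ, 0 < x → x ≤ t → g t ≤ g x * Real.exp ((3/2) * (t - x)) :=
    growth_le hd1 habs
  have hgc : ContinuousOn g (Ioi 0) := fun x hx => (hd1 x hx).continuousAt.continuousWithinAt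
  have hg'c : ContinuousOn g' (Ioi 0) := fun x hx => (hd2 x hx).continuousAt.continuousWithinAt
  have hEc : ContinuousOn E (Ioi 0) := by
    apply ContinuousOn.add
    · apply ContinuousOn.mul _ hg'c
      apply ContinuousOn.sub _ continuousOn_const
      exact Real.continuous_cosh.continuousOn.div Real.continuous_sinh.continuousOn
        (fun x hx => (Real.sinh_pos_iff.2 hx).ne')
    · apply ContinuousOn.sub
      · exact Real.continuous_sin.comp_continuousOn (continuousOn_const.mul hgc)
      · exact continuousOn_const.mul hgc
  obtain ⟨X₁, hX₁4, hX₁⟩ : ∃ X₁ : ℝ, 4 ≤ X₁ ∧ ∀ x ≥ X₁,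
      (9/2) * Real.exp (-2 * x) * g x + 2 * (g x)^3 ≤ (1/8) * g x ∧ g x ≤ 1/2 :=
    exists_X1 hlim hpos
  have hX₁0 : (0:ℝ) < X₁ := by linarith
  have hEq : ∀ x ≥ X₁, |E x| ≤ (9/2) * Real.exp (-2 * x) * g x + 2 * (g x)^3 := by
    intro x hx
    have hx1 : (1:ℝ) ≤ x := by linarith
    obtain ⟨hc0, hc3⟩ := coth_bound x hx1
    exact E_bound habs hpos x hx1 (hX₁ x hx).2 hc0 hc3
  have hE8 : ∀ x ≥ X₁, |E x| ≤ (1/8) * g x := fun x hx => (hEq x hx).trans (hX₁ x hx).1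
  -- key algebraic identity
  have hkey : ∀ t ∈ Ioi (0:ℝ), g'' t - g' t - 2 * g t = E t := by
    intro t ht
    rw [hode t ht, hE]
    ring
  -- derivative facts
  have hW : ∀ t ∈ Ioi (0:ℝ), HasDerivAt (fun s => Real.exp (-2*s) * (g' s + g s))
      (Real.exp (-2*t) * E t) t := by
    intro t ht
    have h1 : HasDerivAt (fun s : ℝ => Real.exp (-2*s)) (Real.exp (-2*t) * (-2)) t := by
      simpa using ((hasDerivAt_id t).const_mul (-2 : ℝ)).exp
    have h2 := (hd2 t ht).add (hd1 t ht)
    have := h1.mul h2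
    refine this.congr_deriv ?_
    rw [← hkey t ht]
    simp only [Pi.add_apply]
    ring
  have hu : ∀ t ∈ Ioi (0:ℝ), HasDerivAt (fun s => Real.exp s * (g' s - 2 * g s))
      (Real.exp t * E t) t := by
    intro t ht
    have h2 := (hd2 t ht).sub ((hd1 t ht).const_mul 2)
    have := (Real.hasDerivAt_exp t).mul h2
    refine this.congr_deriv ?_
    rw [← hkey t ht]
    simp only [Pi.sub_apply]
    ring
  have hp : ∀ t ∈ Ioi (0:ℝ), HasDerivAt (fun s => Real.exp (-2*s) * g s)
      (Real.exp (-3*t) * (Real.exp t * (g' t - 2 * g t))) t := by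
    intro t ht
    have h1 : HasDerivAt (fun s : ℝ => Real.exp (-2*s)) (Real.exp (-2*t) * (-2)) t := by
      simpa using ((hasDerivAt_id t).const_mul (-2 : ℝ)).exp
    have := h1.mul (hd1 t ht)
    refine this.congr_deriv ?_
    have he : Real.exp (-3*t) * Real.exp t = Real.exp (-2*t) := by
      rw [← Real.exp_add]; ring_nf
    rw [show Real.exp (-3*t) * (Real.exp t * (g' t - 2 * g t))
        = (Real.exp (-3*t) * Real.exp t) * (g' t - 2 * g t) by ring, he]
    ring
  have hw : ∀ x ≥ X₁, |g' x + g x| ≤ (1/4) * g x := by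
    intro x hx
    have hx0 : (0:ℝ) < x := lt_of_lt_of_le hX₁0 hx
    have hIoi : Ioi x ⊆ Ioi (0:ℝ) := Ioi_subset_Ioi hx0.le
    have hWm : AEStronglyMeasurable (fun t => Real.exp (-2*t) * E t)
        (volume.restrict (Ioi x)) := by
      apply ContinuousOn.aestronglyMeasurable _ measurableSet_Ioi
      exact ((continuous_const.mul continuous_id).rexp.continuousOn).mul (hEc.mono hIoi)
    have hWbd : ∀ᵐ t ∂(volume.restrict (Ioi x)), ‖Real.exp (-2*t) * E t‖
        ≤ (π/8) * Real.exp (-2*t) := by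
      rw [ae_restrict_iff' measurableSet_Ioi]
      apply ae_of_all
      intro t ht
      have htX : X₁ ≤ t := le_trans hx (le_of_lt ht)
      have ht0 : (0:ℝ) < t := hIoi ht
      rw [norm_mul, Real.norm_eq_abs, Real.norm_eq_abs, Real.abs_exp]
      have h1 : |E t| ≤ (1/8) * g t := hE8 t htX
      have h2 : g t < π := hlt t ht0
      have h3 := Real.exp_pos (-2*t)
      nlinarith [abs_nonneg (E t)]
    have hWint : IntegrableOn (fun t => Real.exp (-2*t) * E t) (Ioi x) :=
      Integrable.mono' ((exp_neg_integrableOn_Ioi x (by norm_num : (0:ℝ) < 2)).const_mul (π/8))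
        hWm hWbd
    have hWtd : Tendsto (fun t => Real.exp (-2*t) * (g' t + g t)) atTop (𝓝 0) := by
      apply squeeze_zero_norm' (a := fun t => (5/2) * π * Real.exp (-2*t))
      · filter_upwards [eventually_gt_atTop (0:ℝ)] with t ht
        rw [norm_mul, Real.norm_eq_abs, Real.norm_eq_abs, Real.abs_exp]
        have h1 := habs t ht
        have h2 := hlt t ht
        have h3 := hpos t ht
        have h4 := Real.exp_pos (-2*t)
        have h5 : |g' t + g t| ≤ (5/2) * g t := by
          have := abs_add_le (g' t) (g t)
          have := abs_of_pos h3
          linarith [this, abs_add_le (g' t) (g t), h1]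
        nlinarith
      · have h1 : Tendsto (fun t : ℝ => Real.exp (-2*t)) atTop (𝓝 0) :=
          Real.tendsto_exp_atBot.comp (tendsto_id.const_mul_atTop_of_neg (by norm_num))
        simpa using h1.const_mul ((5/2) * π)
    have hWftc : ∫ t in Ioi x, Real.exp (-2*t) * E t
        = 0 - Real.exp (-2*x) * (g' x + g x) :=
      integral_Ioi_of_hasDerivAt_of_tendsto'
        (fun t htt => hW t (lt_of_lt_of_le hx0 htt)) hWint hWtd
    have hgrowb : ∀ t ∈ Ioi x, ‖Real.exp (-2*t) * E t‖
        ≤ ((1/8) * g x * Real.exp (-(3/2)*x)) * Real.exp (-(1/2)*t) := by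
      intro t ht
      have htX : X₁ ≤ t := le_trans hx ht.le
      have ht0 : (0:ℝ) < t := hIoi ht
      rw [norm_mul, Real.norm_eq_abs, Real.norm_eq_abs, Real.abs_exp]
      have h1 : |E t| ≤ (1/8) * g t := hE8 t htX
      have h2 : g t ≤ g x * Real.exp ((3/2)*(t-x)) := hgrow x t hx0 ht.le
      have hee : Real.exp (-2*t) * Real.exp ((3/2)*(t-x))
          = Real.exp (-(3/2)*x) * Real.exp (-(1/2)*t) := by
        rw [← Real.exp_add, ← Real.exp_add]; ring_nf
      have h3 := Real.exp_pos (-2*t)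
      calc Real.exp (-2*t) * |E t|
          ≤ Real.exp (-2*t) * ((1/8) * (g x * Real.exp ((3/2)*(t-x)))) := by
            apply mul_le_mul_of_nonneg_left _ h3.le
            linarith
        _ = ((1/8) * g x * Real.exp (-(3/2)*x)) * Real.exp (-(1/2)*t) := by
            linear_combination (g x / 8) * hee
    have hnorm : ‖∫ t in Ioi x, Real.exp (-2*t) * E t‖
        ≤ ((1/8) * g x * Real.exp (-(3/2)*x)) * (Real.exp (-(1/2)*x) / (1/2)) := by
      have hintb : Integrable (fun t => ((1/8) * g x * Real.exp (-(3/2)*x)) * Real.exp (-(1/2)*t))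
          (volume.restrict (Ioi x)) :=
        (exp_neg_integrableOn_Ioi x (by norm_num : (0:ℝ) < 1/2)).const_mul _
      have h := norm_integral_le_of_norm_le hintb
        ((ae_restrict_iff' measurableSet_Ioi).2 (ae_of_all _ hgrowb))
      calc ‖∫ t in Ioi x, Real.exp (-2*t) * E t‖
          ≤ ∫ t in Ioi x, ((1/8) * g x * Real.exp (-(3/2)*x)) * Real.exp (-(1/2)*t) := h
        _ = ((1/8) * g x * Real.exp (-(3/2)*x)) * ∫ t in Ioi x, Real.exp (-(1/2)*t) :=
            integral_const_mul _ _
        _ = ((1/8) * g x * Real.exp (-(3/2)*x)) * (Real.exp (-(1/2)*x) / (1/2)) := by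
            rw [integral_Ioi_exp_neg (by norm_num : (0:ℝ) < 1/2) x]
    have heq : Real.exp (-2*x) * |g' x + g x| = ‖∫ t in Ioi x, Real.exp (-2*t) * E t‖ := by
      rw [hWftc, Real.norm_eq_abs, zero_sub, abs_neg, abs_mul, Real.abs_exp]
    have hfinal : Real.exp (-2*x) * |g' x + g x| ≤ ((1/4) * g x) * Real.exp (-2*x) := by
      rw [heq]
      calc ‖∫ t in Ioi x, Real.exp (-2*t) * E t‖
          ≤ ((1/8) * g x * Real.exp (-(3/2)*x)) * (Real.exp (-(1/2)*x) / (1/2)) := hnorm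
        _ = ((1/4) * g x) * Real.exp (-2*x) := by
            have hxe : Real.exp (-(3/2)*x) * Real.exp (-(1/2)*x) = Real.exp (-2*x) := by
              rw [← Real.exp_add]; ring_nf
            linear_combination (g x / 4) * hxe
    have h2 : |g' x + g x| * Real.exp (-2*x) ≤ ((1/4) * g x) * Real.exp (-2*x) := by
      linarith [hfinal]
    exact le_of_mul_le_mul_right h2 (Real.exp_pos _)
  set u : ℝ → ℝ := fun s => Real.exp s * (g' s - 2 * g s) with hudef
  have hucont : ContinuousOn u (Ioi 0) :=
    Real.continuous_exp.continuousOn.mul (hg'c.sub (continuousOn_const.mul hgc))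
  -- decay
  set C₁ : ℝ := g X₁ * Real.exp ((3/4)*X₁) with hC₁
  have hC₁pos : 0 < C₁ := mul_pos (hpos X₁ hX₁0) (Real.exp_pos _)
  have hdecay : ∀ x ≥ X₁, g x ≤ C₁ * Real.exp (-(3/4)*x) := by
    have hanti : AntitoneOn (fun s => Real.exp ((3/4)*s) * g s) (Ici X₁) := by
      apply anti_Ici (f' := fun s => Real.exp ((3/4)*s) * ((3/4) * g s + g' s))
      · intro s hs
        have hs0 : s ∈ Ioi (0:ℝ) := lt_of_lt_of_le hX₁0 hs
        have h1 : HasDerivAt (fun s : ℝ => Real.exp ((3/4)*s))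
            (Real.exp ((3/4)*s) * (3/4)) s := by
          simpa using ((hasDerivAt_id s).const_mul ((3/4) : ℝ)).exp
        have := h1.mul (hd1 s hs0)
        refine this.congr_deriv ?_
        ring
      · intro s hs
        have h1 := (abs_le.1 (hw s hs)).2
        have h2 := Real.exp_pos ((3/4)*s)
        nlinarith
    intro x hx
    have h := hanti self_mem_Ici hx hx
    simp only at h
    have hee : Real.exp ((3/4)*x) * Real.exp (-(3/4)*x) = 1 := by
      rw [← Real.exp_add]; ring_nf; exact Real.exp_zero
    calc g x = (Real.exp ((3/4)*x) * g x) * Real.exp (-(3/4)*x) := by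
          rw [mul_comm (Real.exp ((3/4)*x)) (g x), mul_assoc, hee, mul_one]
      _ ≤ (Real.exp ((3/4)*X₁) * g X₁) * Real.exp (-(3/4)*x) := by
          apply mul_le_mul_of_nonneg_right h (Real.exp_pos _).le
      _ = C₁ * Real.exp (-(3/4)*x) := by rw [hC₁]; ring
  -- E decay
  set C₂ : ℝ := (9/2)*C₁ + 2*C₁^3 with hC₂
  have hC₂pos : 0 < C₂ := by positivity
  have hEdec : ∀ t ≥ X₁, ‖Real.exp t * E t‖ ≤ C₂ * Real.exp (-(5/4)*t) := by
    intro t ht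
    have ht0 : (0:ℝ) < t := lt_of_lt_of_le hX₁0 ht
    have htnn : (0:ℝ) ≤ t := ht0.le
    rw [norm_mul, Real.norm_eq_abs, Real.norm_eq_abs, Real.abs_exp]
    have h1 := hEq t ht
    have h2 := hdecay t ht
    have hg0 := (hpos t ht0).le
    have h3 : (g t)^3 ≤ (C₁ * Real.exp (-(3/4)*t))^3 := by
      apply pow_le_pow_left₀ hg0 h2
    have e1 : Real.exp t * (Real.exp (-2*t) * Real.exp (-(3/4)*t)) = Real.exp (-(7/4)*t) := by
      rw [← Real.exp_add, ← Real.exp_add]; ring_nf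
    have e2 : Real.exp t * (Real.exp (-(3/4)*t))^3 = Real.exp (-(5/4)*t) := by
      rw [show (Real.exp (-(3/4)*t))^3 = Real.exp (-(3/4)*t) * (Real.exp (-(3/4)*t) * Real.exp (-(3/4)*t)) by ring,
        ← Real.exp_add, ← Real.exp_add, ← Real.exp_add]
      ring_nf
    have e3 : Real.exp (-(7/4)*t) ≤ Real.exp (-(5/4)*t) := by
      apply Real.exp_le_exp.2; linarith
    have hep := Real.exp_pos t
    calc Real.exp t * |E t| ≤ Real.exp t * ((9/2) * Real.exp (-2 * t) * g t + 2 * (g t)^3) :=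
          mul_le_mul_of_nonneg_left h1 hep.le
      _ ≤ Real.exp t * ((9/2) * Real.exp (-2 * t) * (C₁ * Real.exp (-(3/4)*t))
            + 2 * (C₁ * Real.exp (-(3/4)*t))^3) := by
          apply mul_le_mul_of_nonneg_left _ hep.le
          have h4 : (9/2) * Real.exp (-2*t) * g t ≤ (9/2) * Real.exp (-2*t) * (C₁ * Real.exp (-(3/4)*t)) := by
            apply mul_le_mul_of_nonneg_left h2
            positivity
          nlinarith [h3]
      _ = (9/2) * C₁ * Real.exp (-(7/4)*t) + 2 * C₁^3 * Real.exp (-(5/4)*t) := by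
          rw [← e1, ← e2]; ring
      _ ≤ C₂ * Real.exp (-(5/4)*t) := by
          rw [hC₂]
          nlinarith [e3, Real.exp_pos (-(5/4)*t), Real.exp_pos (-(7/4)*t)]
  -- integrability of e^t E on Ioi X₁
  have hum : AEStronglyMeasurable (fun t => Real.exp t * E t) (volume.restrict (Ioi X₁)) := by
    apply ContinuousOn.aestronglyMeasurable _ measurableSet_Ioi
    exact Real.continuous_exp.continuousOn.mul (hEc.mono (Ioi_subset_Ioi hX₁0.le))
  have huint : IntegrableOn (fun t => Real.exp t * E t) (Ioi X₁) := by
    apply Integrable.mono'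
      ((exp_neg_integrableOn_Ioi X₁ (by norm_num : (0:ℝ) < 5/4)).const_mul C₂) hum
    rw [ae_restrict_iff' measurableSet_Ioi]
    exact ae_of_all _ fun t ht => hEdec t ht.le
  have huftc : ∀ x ≥ X₁, ∫ t in X₁..x, Real.exp t * E t = u x - u X₁ := by
    intro x hx
    apply intervalIntegral.integral_eq_sub_of_hasDerivAt
    · intro t ht
      rw [uIcc_of_le hx] at ht
      exact hu t (lt_of_lt_of_le hX₁0 ht.1)
    · apply ContinuousOn.intervalIntegrable
      apply Real.continuous_exp.continuousOn.mul (hEc.mono ?_)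
      rw [uIcc_of_le hx]
      intro t ht
      exact lt_of_lt_of_le hX₁0 ht.1
  have hutend : Tendsto u atTop (𝓝 (u X₁ + ∫ t in Ioi X₁, Real.exp t * E t)) := by
    have hJ := intervalIntegral_tendsto_integral_Ioi X₁ huint tendsto_id
    have h2 : Tendsto (fun x => u X₁ + ∫ t in X₁..x, Real.exp t * E t) atTop
        (𝓝 (u X₁ + ∫ t in Ioi X₁, Real.exp t * E t)) := tendsto_const_nhds.add hJ
    apply h2.congr'
    filter_upwards [eventually_ge_atTop X₁] with x hx
    rw [huftc x hx]
    ring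
  set a₀ : ℝ := u X₁ + ∫ t in Ioi X₁, Real.exp t * E t with ha₀
  set M : ℝ := |u X₁| + (4/5) * C₂ * Real.exp (-(5/4)*X₁) with hM
  have hubdd : ∀ x ≥ X₁, |u x| ≤ M := by
    intro x hx
    have h1 : ‖∫ t in X₁..x, Real.exp t * E t‖ ≤ |∫ t in X₁..x, C₂ * Real.exp (-(5/4)*t)| := by
      apply intervalIntegral.norm_integral_le_abs_of_norm_le
      · rw [ae_restrict_iff' measurableSet_uIoc]
        apply ae_of_all
        intro t ht
        rw [uIoc_of_le hx] at ht
        exact hEdec t ht.1.le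
      · exact (((continuous_const.mul continuous_id).rexp).continuousOn.intervalIntegrable).const_mul C₂
    have h2 : ∫ t in X₁..x, C₂ * Real.exp (-(5/4)*t)
        = C₂ * ((Real.exp (-(5/4)*X₁) - Real.exp (-(5/4)*x))/(5/4)) := by
      rw [intervalIntegral.integral_const_mul, intervalIntegral_exp_neg (by norm_num : (0:ℝ) < 5/4)]
    have h3 : |∫ t in X₁..x, C₂ * Real.exp (-(5/4)*t)| ≤ (4/5) * C₂ * Real.exp (-(5/4)*X₁) := by
      rw [h2, abs_of_nonneg]
      · have h5 := Real.exp_pos (-(5/4)*x)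
        nlinarith [mul_pos hC₂pos h5]
      · have h4 : Real.exp (-(5/4)*x) ≤ Real.exp (-(5/4)*X₁) := by
          apply Real.exp_le_exp.2; linarith
        nlinarith [mul_nonneg hC₂pos.le (sub_nonneg.2 h4)]
    have h5 : |u x - u X₁| ≤ (4/5) * C₂ * Real.exp (-(5/4)*X₁) := by
      rw [← huftc x hx]
      calc |∫ t in X₁..x, Real.exp t * E t| = ‖∫ t in X₁..x, Real.exp t * E t‖ :=
            (Real.norm_eq_abs _).symm
        _ ≤ |∫ t in X₁..x, C₂ * Real.exp (-(5/4)*t)| := h1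
        _ ≤ (4/5) * C₂ * Real.exp (-(5/4)*X₁) := h3
    rw [hM]
    have := abs_sub_abs_le_abs_sub (u x) (u X₁)
    linarith [abs_sub_abs_le_abs_sub (u x) (u X₁), h5]
  -- p representation
  have hprep : ∀ x ≥ X₁, ∫ t in Ioi x, Real.exp (-3*t) * u t = 0 - Real.exp (-2*x) * g x := by
    intro x hx
    have hx0 : (0:ℝ) < x := lt_of_lt_of_le hX₁0 hx
    apply integral_Ioi_of_hasDerivAt_of_tendsto'
      (f := fun s => Real.exp (-2*s) * g s)
    · exact fun t htt => hp t (lt_of_lt_of_le hx0 htt)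
    · -- integrable
      apply Integrable.mono'
        ((exp_neg_integrableOn_Ioi x (by norm_num : (0:ℝ) < 3)).const_mul M)
      · apply ContinuousOn.aestronglyMeasurable _ measurableSet_Ioi
        exact ((continuous_const.mul continuous_id).rexp.continuousOn.mul
          (hucont.mono (Ioi_subset_Ioi hx0.le)))
      · rw [ae_restrict_iff' measurableSet_Ioi]
        apply ae_of_all
        intro t ht
        have htX : X₁ ≤ t := le_trans hx ht.le
        rw [norm_mul, Real.norm_eq_abs, Real.norm_eq_abs, Real.abs_exp]
        have h1 := hubdd t htX
        have h2 := Real.exp_pos (-3*t)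
        nlinarith [abs_nonneg (u t)]
    · -- tendsto 0
      apply squeeze_zero_norm' (a := fun s => π * Real.exp (-2*s))
      · filter_upwards [eventually_gt_atTop (0:ℝ)] with t ht
        rw [norm_mul, Real.norm_eq_abs, Real.norm_eq_abs, Real.abs_exp]
        have h2 := hlt t ht
        have h3 := hpos t ht
        have h4 := Real.exp_pos (-2*t)
        rw [abs_of_pos h3]
        nlinarith
      · have h1 : Tendsto (fun t : ℝ => Real.exp (-2*t)) atTop (𝓝 0) :=
          Real.tendsto_exp_atBot.comp (tendsto_id.const_mul_atTop_of_neg (by norm_num))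
        simpa using h1.const_mul π
  -- final limit
  refine ⟨-a₀/3, ?_⟩
  rw [Metric.tendsto_atTop]
  intro ε hε
  obtain ⟨N₀, hN₀⟩ := Metric.tendsto_atTop.1 hutend (ε/2) (by linarith)
  refine ⟨max N₀ X₁, ?_⟩
  intro x hx
  have hxX₁ : X₁ ≤ x := le_trans (le_max_right _ _) hx
  have hxN₀ : N₀ ≤ x := le_trans (le_max_left _ _) hx
  have hx0 : (0:ℝ) < x := lt_of_lt_of_le hX₁0 hxX₁
  -- integrands and integrability on Ioi x
  have hint3 : IntegrableOn (fun t => Real.exp (-3*t)) (Ioi x) :=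
    exp_neg_integrableOn_Ioi x (by norm_num : (0:ℝ) < 3)
  have hintu : IntegrableOn (fun t => Real.exp (-3*t) * u t) (Ioi x) := by
    apply Integrable.mono' (hint3.const_mul M)
    · exact (((continuous_const.mul continuous_id).rexp).continuousOn.mul
        (hucont.mono (Ioi_subset_Ioi hx0.le))).aestronglyMeasurable measurableSet_Ioi
    · rw [ae_restrict_iff' measurableSet_Ioi]
      apply ae_of_all
      intro t ht
      have htX : X₁ ≤ t := le_trans hxX₁ ht.le
      rw [norm_mul, Real.norm_eq_abs, Real.norm_eq_abs, Real.abs_exp]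
      have h1 := hubdd t htX
      have h2 := Real.exp_pos (-3*t)
      nlinarith [abs_nonneg (u t)]
  have hintua : IntegrableOn (fun t => Real.exp (-3*t) * (u t - a₀)) (Ioi x) := by
    have : (fun t => Real.exp (-3*t) * (u t - a₀))
        = fun t => Real.exp (-3*t) * u t - Real.exp (-3*t) * a₀ := by
      funext t; ring
    rw [this]
    exact hintu.sub (hint3.mul_const a₀)
  -- split the integral
  have hsplit : ∫ t in Ioi x, Real.exp (-3*t) * u t
      = (∫ t in Ioi x, Real.exp (-3*t) * (u t - a₀)) + a₀ * (Real.exp (-3*x)/3) := by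
    have h1 : ∫ t in Ioi x, Real.exp (-3*t) * a₀ = a₀ * (Real.exp (-3*x)/3) := by
      rw [MeasureTheory.integral_mul_const,
        integral_Ioi_exp_neg (by norm_num : (0:ℝ) < 3) x]
      ring
    calc ∫ t in Ioi x, Real.exp (-3*t) * u t
        = ∫ t in Ioi x, (Real.exp (-3*t) * (u t - a₀) + Real.exp (-3*t) * a₀) := by
          apply integral_congr_ae
          apply ae_of_all
          intro t
          ring
      _ = (∫ t in Ioi x, Real.exp (-3*t) * (u t - a₀))
            + ∫ t in Ioi x, Real.exp (-3*t) * a₀ :=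
          integral_add hintua (hint3.mul_const a₀)
      _ = (∫ t in Ioi x, Real.exp (-3*t) * (u t - a₀)) + a₀ * (Real.exp (-3*x)/3) := by
          rw [h1]
  set I₁ : ℝ := ∫ t in Ioi x, Real.exp (-3*t) * (u t - a₀) with hI₁def
  have hrep := hprep x hxX₁
  have hI₁bd : ‖I₁‖ ≤ (ε/2) * (Real.exp (-3*x)/3) := by
    have hb : ∀ᵐ t ∂(volume.restrict (Ioi x)),
        ‖Real.exp (-3*t) * (u t - a₀)‖ ≤ (ε/2) * Real.exp (-3*t) := by
      rw [ae_restrict_iff' measurableSet_Ioi]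
      apply ae_of_all
      intro t ht
      have htN : N₀ ≤ t := le_trans hxN₀ ht.le
      have h1 : |u t - a₀| ≤ ε/2 := by
        have := hN₀ t htN
        rw [Real.dist_eq] at this
        linarith
      rw [norm_mul, Real.norm_eq_abs, Real.norm_eq_abs, Real.abs_exp]
      have h2 := Real.exp_pos (-3*t)
      nlinarith [abs_nonneg (u t - a₀)]
    have h := norm_integral_le_of_norm_le (hint3.const_mul (ε/2)) hb
    calc ‖I₁‖ ≤ ∫ t in Ioi x, (ε/2) * Real.exp (-3*t) := h
      _ = (ε/2) * ∫ t in Ioi x, Real.exp (-3*t) := integral_const_mul _ _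
      _ = (ε/2) * (Real.exp (-3*x)/3) := by
          rw [integral_Ioi_exp_neg (by norm_num : (0:ℝ) < 3) x]
  have he2 : Real.exp (3*x) * Real.exp (-3*x) = 1 := by
    rw [← Real.exp_add]; ring_nf; exact Real.exp_zero
  have hcore : Real.exp x * g x + a₀/3 = -(Real.exp (3*x) * I₁) := by
    have he1 : Real.exp (3*x) * Real.exp (-2*x) = Real.exp x := by
      rw [← Real.exp_add]; ring_nf
    have hA : Real.exp (-2*x) * g x = -(I₁ + a₀ * (Real.exp (-3*x)/3)) := by
      rw [hsplit] at hrep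
      linarith
    linear_combination Real.exp (3*x) * hA + (-(g x)) * he1 + (-(a₀/3)) * he2
  rw [Real.dist_eq]
  have hgoal : |Real.exp x * g x - -a₀/3| ≤ ε/6 := by
    have : Real.exp x * g x - -a₀/3 = -(Real.exp (3*x) * I₁) := by
      rw [← hcore]; ring
    rw [this, abs_neg, abs_mul, Real.abs_exp]
    have h1 : |I₁| ≤ (ε/2) * (Real.exp (-3*x)/3) := hI₁bd
    have h3 := Real.exp_pos (3*x)
    calc Real.exp (3*x) * |I₁| ≤ Real.exp (3*x) * ((ε/2) * (Real.exp (-3*x)/3)) :=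
          mul_le_mul_of_nonneg_left h1 h3.le
      _ = ε/6 := by
          rw [show Real.exp (3*x) * ((ε/2) * (Real.exp (-3*x)/3))
            = (Real.exp (3*x) * Real.exp (-3*x)) * (ε/6) by ring, he2]
          ring
  linarith

end StableManifoldAux

/-- Remark 2: a connecting orbit approaches its endpoint along the one-dimensional
stable manifold. If a `C²` solution of `h'' - coth(x) h' + sin(2h) = 0` on `(0,∞)`
satisfies `|h| < π/2` everywhere and `h → -π/2` at infinity, then there is a constant
`a` with `eˣ (h(x) + π/2) → a` as `x → ∞`, i.e. `h(x) ~ -π/2 + a e^{-x}`. -/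
theorem connecting_orbit_stable_manifold_asymptotics
    (h h' h'' : ℝ → ℝ)
    (hd1 : ∀ x ∈ Ioi (0:ℝ), HasDerivAt h (h' x) x)
    (hd2 : ∀ x ∈ Ioi (0:ℝ), HasDerivAt h' (h'' x) x)
    (hcont : ContinuousOn h'' (Ioi 0))
    (hode : ∀ x ∈ Ioi (0:ℝ),
      h'' x - (Real.cosh x / Real.sinh x) * h' x + Real.sin (2 * h x) = 0)
    (hbound : ∀ x > (0:ℝ), |h x| < π / 2)
    (hlim : Filter.Tendsto h Filter.atTop (𝓝 (-(π / 2)))) :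
    ∃ a : ℝ, Filter.Tendsto (fun x => Real.exp x * (h x + π / 2))
      Filter.atTop (𝓝 a) := by
  set g : ℝ → ℝ := fun x => h x + π / 2 with hg
  have hd1g : ∀ x ∈ Ioi (0:ℝ), HasDerivAt g (h' x) x := fun x hx =>
    (hd1 x hx).add_const (π/2)
  have hodeg : ∀ x ∈ Ioi (0:ℝ),
      h'' x = (Real.cosh x / Real.sinh x) * h' x + Real.sin (2 * g x) := by
    intro x hx
    have h1 := hode x hx
    have h2 : Real.sin (2 * g x) = -Real.sin (2 * h x) := by
      rw [hg]
      rw [show 2 * (h x + π/2) = 2 * h x + π by ring, Real.sin_add_pi]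
    rw [h2]
    linarith
  have hposg : ∀ x > (0:ℝ), 0 < g x := by
    intro x hx
    have := (abs_lt.1 (hbound x hx)).1
    rw [hg]
    simp only
    linarith
  have hltg : ∀ x > (0:ℝ), g x < π := by
    intro x hx
    have := (abs_lt.1 (hbound x hx)).2
    rw [hg]
    simp only
    linarith [Real.pi_pos]
  have hlimg : Tendsto g atTop (𝓝 0) := by
    have := hlim.add_const (π/2)
    simpa using this
  exact main_g hd1g hd2 hodeg hposg hltg hlimg
end
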